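/- arXiv:1404.0787 — 9 statements merged into one kernel-verified Lean document; each statement's English description precedes it below -/
import Mathlib

section
/- If X is a reflexive Banach space, f: X → (-∞,∞] is weakly sequentially lower semicontinuous and level bounded (all sublevel sets bounded), φ: X → [0,∞) is weakly sequentially lower semicontinuous, and the infimal convolution (f⊕φ)(x) := inf{f(w)+φ(w−x) : w ∈ X} is finite everywhere, then f⊕φ is weakly sequentially lower semicontinuous on X. -/
/-!
Fix `c > liminf (f ⊕ φ)(x_k)` for a weakly convergent sequence `x_k ⇀ x₀`. Along a
subsequence there are `w_k` with `f w_k + φ (w_k - x_k) < c`; as `φ ≥ 0`, all `w_k` lie in the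
sublevel set `{f ≤ c}`, so they are bounded and, `X` being reflexive, a further subsequence
converges weakly to some `w̄`. Then `w_k - x_k ⇀ w̄ - x₀`, and weak lower semicontinuity of `f`
and `φ` gives `(f ⊕ φ)(x₀) ≤ f w̄ + φ (w̄ - x₀) ≤ liminf (f w_k + φ (w_k - x_k)) ≤ c`.
-/

open Filter Topology Set Bornology

variable {X : Type*} [NormedAddCommGroup X] [NormedSpace ℝ X]

/-- Infimal convolution of an extended-real-valued `f` with a real-valued `φ`. -/
noncomputable def infConv (f : X → EReal) (φ : X → ℝ) (x : X) : EReal :=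
  ⨅ w, f w + ((φ (w - x) : ℝ) : EReal)

/-- ε-Fréchet subdifferential of a real-valued function. -/
def frechetSubdiff (g : X → ℝ) (ε : ℝ) (x0 : X) : Set (X →L[ℝ] ℝ) :=
  {p | ∀ η : ℝ, 0 < η → ∀ᶠ x in 𝓝 x0, p (x - x0) ≤ g x - g x0 + (ε + η) * ‖x - x0‖}

/-- ε-Fréchet subdifferential of an extended-real-valued function. -/
def frechetSubdiffE (f : X → EReal) (ε : ℝ) (x0 : X) : Set (X →L[ℝ] ℝ) :=
  {p | ∀ η : ℝ, 0 < η → ∀ᶠ x in 𝓝 x0,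
    ((p (x - x0) : ℝ) : EReal) ≤ f x - f x0 + (((ε + η) * ‖x - x0‖ : ℝ) : EReal)}

/-- Limiting (Mordukhovich) subdifferential of a real-valued function. -/
def limitingSubdiff (g : X → ℝ) (x0 : X) : Set (X →L[ℝ] ℝ) :=
  {p | ∃ (x : ℕ → X) (ε : ℕ → ℝ) (q : ℕ → X →L[ℝ] ℝ),
    (∀ k, 0 ≤ ε k) ∧ Tendsto ε atTop (𝓝 0) ∧
    Tendsto x atTop (𝓝 x0) ∧ Tendsto (fun k => g (x k)) atTop (𝓝 (g x0)) ∧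
    (∀ k, q k ∈ frechetSubdiff g (ε k) (x k)) ∧
    (∀ v : X, Tendsto (fun k => (q k) v) atTop (𝓝 (p v)))}

/-- Limiting (Mordukhovich) subdifferential of an extended-real-valued function. -/
def limitingSubdiffE (f : X → EReal) (x0 : X) : Set (X →L[ℝ] ℝ) :=
  {p | ∃ (x : ℕ → X) (ε : ℕ → ℝ) (q : ℕ → X →L[ℝ] ℝ),
    (∀ k, 0 ≤ ε k) ∧ Tendsto ε atTop (𝓝 0) ∧
    Tendsto x atTop (𝓝 x0) ∧ Tendsto (fun k => f (x k)) atTop (𝓝 (f x0)) ∧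
    (∀ k, q k ∈ frechetSubdiffE f (ε k) (x k)) ∧
    (∀ v : X, Tendsto (fun k => (q k) v) atTop (𝓝 (p v)))}

/-- Fréchet strict differentiability of an extended-real-valued function. -/
def FrechetStrictDiffAtE (f : X → EReal) (x0 : X) : Prop :=
  ∃ v : X →L[ℝ] ℝ, ∀ ε : ℝ, 0 < ε → ∃ δ > (0 : ℝ), ∀ x y : X,
    ‖x - x0‖ < δ → ‖y - x0‖ < δ →
      f x - f y - ((v (x - y) : ℝ) : EReal) ≤ ((ε * ‖x - y‖ : ℝ) : EReal) ∧
      ((-(ε * ‖x - y‖) : ℝ) : EReal) ≤ f x - f y - ((v (x - y) : ℝ) : EReal)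

/-- Local Lipschitz continuity of an extended-real-valued function around a point. -/
def LocallyLipschitzAtE (f : X → EReal) (x0 : X) : Prop :=
  ∃ ℓ : ℝ, 0 ≤ ℓ ∧ ∃ δ > (0 : ℝ), ∀ x y : X, ‖x - x0‖ < δ → ‖y - x0‖ < δ →
    f x - f y ≤ ((ℓ * ‖x - y‖ : ℝ) : EReal)

open NormedSpace

lemma exists_seq_strongDual_eq_zero_of_mem_closure {𝕜 E : Type*} [RCLike 𝕜]
    [NormedAddCommGroup E] [NormedSpace 𝕜 E] {c : Set E} (hc : c.Countable) :
    ∃ g : ℕ → StrongDual 𝕜 E, ∀ x ∈ closure c, (∀ n, g n x = 0) → x = 0 := by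
  rcases c.eq_empty_or_nonempty with rfl | hne
  · exact ⟨0, by simp⟩
  obtain ⟨d, rfl⟩ := hc.exists_eq_range hne
  choose g hg_norm hg_apply using fun n => exists_dual_vector'' 𝕜 (d n)
  refine ⟨g, fun x hx hgx => ?_⟩
  by_contra hx0
  obtain ⟨n, hn⟩ := Metric.mem_closure_range_iff.mp hx (‖x‖ / 2) (by positivity)
  rw [dist_eq_norm] at hn
  have hdn : ‖d n‖ ≤ ‖x - d n‖ := calc
    ‖d n‖ = ‖g n (x - d n)‖ := by simp [map_sub, hgx n, hg_apply]
    _ ≤ ‖g n‖ * ‖x - d n‖ := (g n).le_opNorm _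
    _ ≤ ‖x - d n‖ := mul_le_of_le_one_left (norm_nonneg _) (hg_norm n)
  have := norm_le_norm_add_norm_sub' x (d n)
  linarith

lemma IsCompact.isSeqCompact_of_separating {T : Type*} [TopologicalSpace T] {K : Set T}
    (hK : IsCompact K) (g : ℕ → T → ℝ) (hg : ∀ n, Continuous (g n))
    (hsep : ∀ a ∈ K, ∀ b ∈ K, (∀ n, g n a = g n b) → a = b) : IsSeqCompact K := by
  have := isCompact_iff_compactSpace.mp hK
  have : TopologicalSpace.MetrizableSpace K :=
    Metric.PiNatEmbed.TopologicalSpace.MetrizableSpace.of_countable_separating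
      (fun n (k : K) => g n k) (fun n => (hg n).comp continuous_subtype_val)
      fun a b hab => by
        by_contra! h
        exact hab (Subtype.ext (hsep _ a.2 _ b.2 h))
  exact isSeqCompact_iff_seqCompactSpace.mpr inferInstance

lemma surjective_inclusionInDoubleDualWeak {𝕜 E : Type*} [NontriviallyNormedField 𝕜]
    [SeminormedAddCommGroup E] [NormedSpace 𝕜 E]
    (hrefl : Function.Surjective (inclusionInDoubleDual 𝕜 E)) :
    Function.Surjective (inclusionInDoubleDualWeak 𝕜 E) := fun F =>
  let ⟨x, hx⟩ := hrefl (StrongDual.toWeakDual.symm F)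
  ⟨toWeakSpace 𝕜 E x,
    (congrArg StrongDual.toWeakDual hx).trans (LinearEquiv.apply_symm_apply _ F)⟩

/- The weak closure `K` of the sequence is weakly compact by Banach–Alaoglu in the bidual. It lies
in the closed span of the sequence, a separable subspace on which countably many functionals
separate points; these make `K` metrizable, hence sequentially compact. -/
theorem exists_weakly_tendsto_subseq_of_isBounded
    (hrefl : Function.Surjective (inclusionInDoubleDual ℝ X))
    {w : ℕ → X} (hw : IsBounded (range w)) :
    ∃ wbar : X, ∃ s : ℕ → ℕ, StrictMono s ∧
      ∀ p : StrongDual ℝ X, Tendsto (fun j => p (w (s j))) atTop (𝓝 (p wbar)) := by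
  set W := toWeakSpace ℝ X
  set K := closure (W '' range w)
  have hK : IsCompact K := isCompact_closure_of_isBounded ℝ X _
    (by rwa [preimage_image_eq _ W.injective])
    (by simp [(surjective_inclusionInDoubleDualWeak hrefl).range_eq])
  set Y := (Submodule.span ℝ (range w)).topologicalClosure
  have hKY : K ⊆ W '' Y := by
    rw [Submodule.topologicalClosure_coe,
      (Submodule.span ℝ (range w)).convex.toWeakSpace_closure ℝ]
    exact closure_mono (image_mono Submodule.subset_span)
  obtain ⟨c, hc, hYc⟩ : TopologicalSpace.IsSeparable (Y : Set X) := by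
    rw [Submodule.topologicalClosure_coe]
    exact ((countable_range w).isSeparable.span).closure
  obtain ⟨g, hg⟩ := exists_seq_strongDual_eq_zero_of_mem_closure (𝕜 := ℝ) hc
  have hKseq : IsSeqCompact K := by
    refine hK.isSeqCompact_of_separating (fun n a => g n (W.symm a))
      (fun n => WeakBilin.eval_continuous (topDualPairing ℝ X).flip (g n)) ?_
    rintro _ ha _ hb hab
    obtain ⟨a, haY, rfl⟩ := hKY ha
    obtain ⟨b, hbY, rfl⟩ := hKY hb
    have : a - b = 0 :=
      hg _ (hYc (Y.sub_mem haY hbY)) fun n => by simpa [sub_eq_zero] using hab n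
    rw [sub_eq_zero.mp this]
  obtain ⟨a, -, s, hs, hlim⟩ :=
    hKseq fun k => subset_closure (mem_image_of_mem W (mem_range_self k))
  exact ⟨W.symm a, s, hs, fun p =>
    ((WeakBilin.eval_continuous (topDualPairing ℝ X).flip p).tendsto a).comp hlim⟩

theorem infConv_le_of_forall_infConv_lt
    (hrefl : Function.Surjective (inclusionInDoubleDual ℝ X))
    {f : X → EReal} {φ : X → ℝ} (hφpos : ∀ x, 0 ≤ φ x)
    (hfwlsc : ∀ (x : ℕ → X) (x0 : X),
      (∀ p : X →L[ℝ] ℝ, Tendsto (fun k => p (x k)) atTop (𝓝 (p x0))) →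
      f x0 ≤ liminf (fun k => f (x k)) atTop)
    (hφwlsc : ∀ (x : ℕ → X) (x0 : X),
      (∀ p : X →L[ℝ] ℝ, Tendsto (fun k => p (x k)) atTop (𝓝 (p x0))) →
      (φ x0 : EReal) ≤ liminf (fun k => (φ (x k) : EReal)) atTop)
    (hlev : ∀ α : ℝ, IsBounded {x : X | f x ≤ α})
    {x : ℕ → X} {x0 : X}
    (hx : ∀ p : X →L[ℝ] ℝ, Tendsto (fun k => p (x k)) atTop (𝓝 (p x0)))
    {c : ℝ} (hc : ∀ k, infConv f φ (x k) < c) :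
    infConv f φ x0 ≤ c := by
  choose w hw using fun k => iInf_lt_iff.mp (hc k)
  have hfw : ∀ k, f (w k) ≤ c := fun k =>
    (le_add_of_nonneg_right (EReal.coe_nonneg.mpr (hφpos _))).trans (hw k).le
  obtain ⟨wbar, s, hs, hws⟩ :=
    exists_weakly_tendsto_subseq_of_isBounded hrefl ((hlev c).subset (range_subset_iff.mpr hfw))
  have hdiff : ∀ p : X →L[ℝ] ℝ,
      Tendsto (fun j => p (w (s j) - x (s j))) atTop (𝓝 (p (wbar - x0))) := fun p => by
    simpa only [map_sub, Function.comp_def] using (hws p).sub ((hx p).comp hs.tendsto_atTop)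
  calc infConv f φ x0 ≤ f wbar + φ (wbar - x0) := iInf_le _ wbar
    _ ≤ liminf (fun j => f (w (s j))) atTop
          + liminf (fun j => (φ (w (s j) - x (s j)) : EReal)) atTop :=
      add_le_add (hfwlsc _ _ hws) (hφwlsc _ _ hdiff)
    _ ≤ liminf (fun j => f (w (s j)) + φ (w (s j) - x (s j))) atTop := EReal.le_liminf_add
    _ ≤ c := liminf_le_of_frequently_le (Frequently.of_forall fun j => (hw (s j)).le)

theorem stmt_0_general
    (hrefl : Function.Surjective (NormedSpace.inclusionInDoubleDual ℝ X))
    (f : X → EReal) (φ : X → ℝ)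
    (hφpos : ∀ x, 0 ≤ φ x)
    (hfwlsc : ∀ (x : ℕ → X) (x0 : X),
      (∀ p : X →L[ℝ] ℝ, Tendsto (fun k => p (x k)) atTop (𝓝 (p x0))) →
      f x0 ≤ liminf (fun k => f (x k)) atTop)
    (hφwlsc : ∀ (x : ℕ → X) (x0 : X),
      (∀ p : X →L[ℝ] ℝ, Tendsto (fun k => p (x k)) atTop (𝓝 (p x0))) →
      ((φ x0 : ℝ) : EReal) ≤ liminf (fun k => ((φ (x k) : ℝ) : EReal)) atTop)
    (hlev : ∀ α : ℝ, IsBounded {x : X | f x ≤ ((α : ℝ) : EReal)}) :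
    ∀ (x : ℕ → X) (x0 : X),
      (∀ p : X →L[ℝ] ℝ, Tendsto (fun k => p (x k)) atTop (𝓝 (p x0))) →
      infConv f φ x0 ≤ liminf (fun k => infConv f φ (x k)) atTop := by
  intro x x0 hx
  refine EReal.le_of_forall_lt_iff_le.mp fun c hc => ?_
  obtain ⟨s, hs, hsc⟩ := extraction_of_frequently_atTop (frequently_lt_of_liminf_lt (h := hc))
  exact infConv_le_of_forall_infConv_lt hrefl hφpos hfwlsc hφwlsc hlev
    (fun p => (hx p).comp hs.tendsto_atTop) hsc

/-- weak sequential lower semicontinuity of the infimal convolution. -/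
theorem stmt_0 [CompleteSpace X]
    (hrefl : Function.Surjective (NormedSpace.inclusionInDoubleDual ℝ X))
    (f : X → EReal) (φ : X → ℝ)
    (hfprop : ∃ x, f x ≠ ⊤) (hfbot : ∀ x, f x ≠ ⊥)
    (hφpos : ∀ x, 0 ≤ φ x)
    (hfin : ∀ x, infConv f φ x ≠ ⊥ ∧ infConv f φ x ≠ ⊤)
    (hfwlsc : ∀ (x : ℕ → X) (x0 : X),
      (∀ p : X →L[ℝ] ℝ, Tendsto (fun k => p (x k)) atTop (𝓝 (p x0))) →
      f x0 ≤ liminf (fun k => f (x k)) atTop)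
    (hφwlsc : ∀ (x : ℕ → X) (x0 : X),
      (∀ p : X →L[ℝ] ℝ, Tendsto (fun k => p (x k)) atTop (𝓝 (p x0))) →
      ((φ x0 : ℝ) : EReal) ≤ liminf (fun k => ((φ (x k) : ℝ) : EReal)) atTop)
    (hlev : ∀ α : ℝ, IsBounded {x : X | f x ≤ ((α : ℝ) : EReal)}) :
    ∀ (x : ℕ → X) (x0 : X),
      (∀ p : X →L[ℝ] ℝ, Tendsto (fun k => p (x k)) atTop (𝓝 (p x0))) →
      infConv f φ x0 ≤ liminf (fun k => infConv f φ (x k)) atTop :=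
  stmt_0_general hrefl f φ hφpos hfwlsc hφwlsc hlev
end

section
/- Suppose f: X → (-∞,∞] is bounded below, φ: X → [0,∞) is Lipschitz continuous and bounded above on every bounded subset of X, and f is level bounded. Then f⊕φ is Lipschitz continuous on every bounded subset of X. -/
open Filter Topology Set Bornology

variable {X : Type*} [NormedAddCommGroup X] [NormedSpace ℝ X]

/-!
Fix `x₀` with `f x₀ < ∞`; on a bounded `K` the infimal convolution is at most
`α := f x₀ + sup φ(x₀ - K)`. Hence, as `φ ≥ 0`, every `δ`-minimiser `w` (with `δ ≤ 1`) of
`f + φ(· - y)`, `y ∈ K`, lies in the bounded sublevel set `S = {f ≤ α + 1}`. Testing `x` against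
such a `w` gives `g x - g y ≤ δ + φ(w - x) - φ(w - y) ≤ δ + L ‖x - y‖`, where `L` is a Lipschitz
constant of `φ` on the bounded set `S - K`.
-/

section InfConv

open Pointwise

variable {E : Type*} [NormedAddCommGroup E] (f : E → EReal) (φ : E → ℝ)

theorem infConv_le (x w : E) : infConv f φ x ≤ f w + (φ (w - x) : EReal) :=
  iInf_le (fun w => f w + (φ (w - x) : EReal)) w

theorem exists_infConv_le_of_isBounded {x₀ : E} (hx₀ : f x₀ ≠ ⊤)
    (hφbdd : ∀ K : Set E, IsBounded K → ∃ M : ℝ, ∀ x ∈ K, φ x ≤ M)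
    {K : Set E} (hK : IsBounded K) : ∃ α : ℝ, ∀ x ∈ K, infConv f φ x ≤ α := by
  obtain ⟨M, hM⟩ := hφbdd _ ((isBounded_singleton (x := x₀)).sub hK)
  refine ⟨(f x₀).toReal + M, fun x hx => ?_⟩
  calc infConv f φ x ≤ f x₀ + (φ (x₀ - x) : EReal) := infConv_le f φ x x₀
    _ ≤ (f x₀).toReal + (M : EReal) :=
      add_le_add (EReal.le_coe_toReal hx₀)
        (EReal.coe_le_coe_iff.2 (hM _ (sub_mem_sub rfl hx)))

variable {f φ} {g : E → ℝ} (hg : ∀ x, (g x : EReal) = infConv f φ x)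
include hg

theorem le_add_sub_of_add_lt {x y w : E} {a δ : ℝ} (hw : f w = a)
    (hnear : a + φ (w - y) < g y + δ) : g x ≤ g y + δ + (φ (w - x) - φ (w - y)) := by
  have hgx : g x ≤ a + φ (w - x) := by
    have := infConv_le f φ x w
    rw [← hg, hw] at this
    exact_mod_cast this
  linarith

theorem exists_add_lt_of_pos (hfbot : ∀ x, f x ≠ ⊥) (hφpos : ∀ x, 0 ≤ φ x) (y : E) {δ : ℝ}
    (hδ : 0 < δ) : ∃ w, ∃ a : ℝ, f w = a ∧ a + φ (w - y) < g y + δ := by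
  have hlt : infConv f φ y < (g y + δ : ℝ) := by
    rw [← hg]; exact_mod_cast lt_add_of_pos_right (g y) hδ
  obtain ⟨w, hw⟩ := iInf_lt_iff.mp hlt
  have hfw : f w = (f w).toReal := (EReal.coe_toReal (lt_top_of_lt
    ((le_add_of_nonneg_right (EReal.coe_nonneg.2 (hφpos _))).trans_lt hw)).ne (hfbot w)).symm
  rw [hfw] at hw
  exact ⟨w, _, hfw, by exact_mod_cast hw⟩

theorem sub_le_mul_norm_sub_of_lipschitzOn_sublevel_sub (hfbot : ∀ x, f x ≠ ⊥)
    (hφpos : ∀ x, 0 ≤ φ x) {K : Set E} {α L : ℝ} (hα : ∀ y ∈ K, g y ≤ α)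
    (hL : ∀ u ∈ {w | f w ≤ (α + 1 : ℝ)} - K, ∀ v ∈ {w | f w ≤ (α + 1 : ℝ)} - K,
      |φ u - φ v| ≤ L * ‖u - v‖)
    {x y : E} (hx : x ∈ K) (hy : y ∈ K) : g x - g y ≤ L * ‖x - y‖ := by
  suffices ∀ δ, 0 < δ → δ ≤ 1 → g x ≤ g y + L * ‖x - y‖ + δ by
    have : g x ≤ g y + L * ‖x - y‖ := le_of_forall_pos_le_add fun ε hε =>
      (this _ (lt_min hε one_pos) (min_le_right ε 1)).trans (by gcongr; exact min_le_left ε 1)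
    linarith
  intro δ hδ hδ1
  obtain ⟨w, a, hfw, hnear⟩ := exists_add_lt_of_pos hg hfbot hφpos y hδ
  have hwS : f w ≤ (α + 1 : ℝ) := by
    rw [hfw, EReal.coe_le_coe_iff]; linarith [hα y hy, hφpos (w - y)]
  have hLip := hL _ (sub_mem_sub hwS hx) _ (sub_mem_sub hwS hy)
  rw [sub_sub_sub_cancel_left, norm_sub_rev] at hLip
  linarith [le_add_sub_of_add_lt hg (x := x) hfw hnear, (abs_le.1 hLip).2]

end InfConv

theorem stmt_3_general (f : X → EReal) (φ : X → ℝ) (g : X → ℝ)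
    (hfbot : ∀ x, f x ≠ ⊥) (hfprop : ∃ x, f x ≠ ⊤) (hφpos : ∀ x, 0 ≤ φ x)
    (hφLip : ∀ K : Set X, IsBounded K → ∃ L : ℝ, 0 ≤ L ∧
      ∀ x ∈ K, ∀ y ∈ K, |φ x - φ y| ≤ L * ‖x - y‖)
    (hφbdd : ∀ K : Set X, IsBounded K → ∃ M : ℝ, ∀ x ∈ K, φ x ≤ M)
    (hlev : ∀ α : ℝ, IsBounded {x : X | f x ≤ ((α : ℝ) : EReal)})
    (hg : ∀ x, (g x : EReal) = infConv f φ x) :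
    ∀ K : Set X, IsBounded K → ∃ L : ℝ, 0 ≤ L ∧
      ∀ x ∈ K, ∀ y ∈ K, |g x - g y| ≤ L * ‖x - y‖ := by
  intro K hK
  obtain ⟨x₀, hx₀⟩ := hfprop
  obtain ⟨α, hα⟩ := exists_infConv_le_of_isBounded f φ hx₀ hφbdd hK
  have hgα : ∀ y ∈ K, g y ≤ α := fun y hy => by
    have := hα y hy; rwa [← hg, EReal.coe_le_coe_iff] at this
  obtain ⟨L, hL0, hL⟩ := hφLip _ ((hlev (α + 1)).sub hK)
  have key {x y} (hx : x ∈ K) (hy : y ∈ K) :=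
    sub_le_mul_norm_sub_of_lipschitzOn_sublevel_sub hg hfbot hφpos hgα hL hx hy
  refine ⟨L, hL0, fun x hx y hy => abs_sub_le_iff.2 ⟨key hx hy, ?_⟩⟩
  rw [norm_sub_rev]
  exact key hy hx

/-- Lipschitz continuity on bounded sets of the infimal convolution. -/
theorem stmt_3 [CompleteSpace X] (f : X → EReal) (φ : X → ℝ) (g : X → ℝ)
    (hfbot : ∀ x, f x ≠ ⊥) (hfprop : ∃ x, f x ≠ ⊤) (hφpos : ∀ x, 0 ≤ φ x)
    (hfbdd : ∃ c : ℝ, ∀ x, ((c : ℝ) : EReal) ≤ f x)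
    (hφLip : ∀ K : Set X, IsBounded K → ∃ L : ℝ, 0 ≤ L ∧
      ∀ x ∈ K, ∀ y ∈ K, |φ x - φ y| ≤ L * ‖x - y‖)
    (hφbdd : ∀ K : Set X, IsBounded K → ∃ M : ℝ, ∀ x ∈ K, φ x ≤ M)
    (hlev : ∀ α : ℝ, IsBounded {x : X | f x ≤ ((α : ℝ) : EReal)})
    (hg : ∀ x, (g x : EReal) = infConv f φ x) :
    ∀ K : Set X, IsBounded K → ∃ L : ℝ, 0 ≤ L ∧
      ∀ x ∈ K, ∀ y ∈ K, |g x - g y| ≤ L * ‖x - y‖ :=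
  stmt_3_general f φ g hfbot hfprop hφpos hφLip hφbdd hlev hg
end

section
/- Let x̄ ∈ S₀ := {x : (f⊕φ)(x) = f(x)}. If f is calm at x̄ relative to dom f with constant ℓ (|f(x)−f(x̄)| ≤ ℓ‖x−x̄‖ for all x ∈ dom f), φ is coercive with constant m > ℓ (m‖x‖ ≤ φ(x) for all x), and φ(0)=0, then f⊕φ is well-posed at x̄: the projection set P(x̄) = {w : f(w)+φ(w−x̄) = (f⊕φ)(x̄)} equals {x̄}, and every minimizing sequence w_k (i.e. f(w_k)+φ(w_k−x̄) → (f⊕φ)(x̄)) converges in norm to x̄. -/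
open Filter Topology Set Bornology

variable {X : Type*} [NormedAddCommGroup X] [NormedSpace ℝ X]

/-
Calmness of `f` with constant `ℓ` and coercivity of `φ` with constant `m` give the sharp growth
`f w + φ (w - x̄) ≥ f x̄ + (m - ℓ) ‖w - x̄‖`. Since `m > ℓ`, the value `f x̄ = (f ⊕ φ)(x̄)` is attained
only at `x̄`, and a sequence whose values tend to it is forced into every ball around `x̄`.
-/

section SharpMinimum

variable {α : Type*} [MetricSpace α] {F : α → EReal} {c κ : ℝ} {x0 : α}

theorem eq_of_sharp_minimum (hκ : 0 < κ) (hF : ∀ w, ((c + κ * dist w x0 : ℝ) : EReal) ≤ F w)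
    {w : α} (hw : F w ≤ c) : w = x0 := by
  have hle : c + κ * dist w x0 ≤ c := EReal.coe_le_coe_iff.mp ((hF w).trans hw)
  have hdist : dist w x0 ≤ 0 := by nlinarith
  exact dist_le_zero.mp hdist

theorem tendsto_of_sharp_minimum {ι : Type*} {l : Filter ι} {w : ι → α} (hκ : 0 < κ)
    (hF : ∀ w, ((c + κ * dist w x0 : ℝ) : EReal) ≤ F w)
    (hw : Tendsto (fun k => F (w k)) l (𝓝 (c : EReal))) : Tendsto w l (𝓝 x0) := by
  refine Metric.tendsto_nhds.mpr fun ε hε => ?_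
  have hlt : (c : EReal) < ((c + κ * ε : ℝ) : EReal) :=
    EReal.coe_lt_coe_iff.mpr (by nlinarith)
  filter_upwards [hw.eventually_lt_const hlt] with k hk
  have h := EReal.coe_lt_coe_iff.mp ((hF (w k)).trans_lt hk)
  nlinarith

end SharpMinimum

theorem add_mul_dist_le_of_calm_of_coercive {E : Type*} [NormedAddCommGroup E]
    {f : E → EReal} {φ : E → ℝ} {x0 : E} {c ℓ m : ℝ} (hfbot : ∀ x, f x ≠ ⊥)
    (hcalm : ∀ x, f x ≠ ⊤ → |(f x).toReal - c| ≤ ℓ * ‖x - x0‖)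
    (hcoer : ∀ x, m * ‖x‖ ≤ φ x) (w : E) :
    ((c + (m - ℓ) * dist w x0 : ℝ) : EReal) ≤ f w + ((φ (w - x0) : ℝ) : EReal) := by
  by_cases htop : f w = ⊤
  · simp [htop]
  · have hcalm_w := (abs_le.mp (hcalm w htop)).1
    have hcoer_w := hcoer (w - x0)
    rw [← EReal.coe_toReal htop (hfbot w), ← EReal.coe_add, EReal.coe_le_coe_iff, dist_eq_norm]
    linarith

theorem stmt_4_general (f : X → EReal) (φ : X → ℝ) (g : X → ℝ)
    (hfbot : ∀ x, f x ≠ ⊥) (hφ0 : φ 0 = 0)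
    (x0 : X) (hx0 : (g x0 : EReal) = f x0)
    (ℓ m : ℝ) (hlm : ℓ < m)
    (hcalm : ∀ x : X, f x ≠ ⊤ → |(f x).toReal - (f x0).toReal| ≤ ℓ * ‖x - x0‖)
    (hcoer : ∀ x : X, m * ‖x‖ ≤ φ x) :
    {w : X | f w + ((φ (w - x0) : ℝ) : EReal) = (g x0 : EReal)} = {x0} ∧
    ∀ w : ℕ → X,
      Tendsto (fun k => f (w k) + ((φ (w k - x0) : ℝ) : EReal)) atTop (𝓝 ((g x0 : ℝ) : EReal)) →
      Tendsto w atTop (𝓝 x0) := by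
  have hfx0 : (f x0).toReal = g x0 := by rw [← hx0, EReal.toReal_coe]
  have hgrowth := add_mul_dist_le_of_calm_of_coercive hfbot (hfx0 ▸ hcalm) hcoer
  have hκ : 0 < m - ℓ := sub_pos.mpr hlm
  refine ⟨eq_singleton_iff_unique_mem.mpr ⟨?_, fun w hw => eq_of_sharp_minimum hκ hgrowth hw.le⟩,
    fun w hw => tendsto_of_sharp_minimum hκ hgrowth hw⟩
  simp [hφ0, hx0]

/-- well-posedness of the infimal convolution at points of `S₀`. -/
theorem stmt_4 [CompleteSpace X] (f : X → EReal) (φ : X → ℝ) (g : X → ℝ)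
    (hfbot : ∀ x, f x ≠ ⊥) (hφpos : ∀ x, 0 ≤ φ x) (hφ0 : φ 0 = 0)
    (hg : ∀ x, (g x : EReal) = infConv f φ x)
    (x0 : X) (hx0 : (g x0 : EReal) = f x0)
    (ℓ m : ℝ) (hℓ : 0 ≤ ℓ) (hlm : ℓ < m)
    (hcalm : ∀ x : X, f x ≠ ⊤ → |(f x).toReal - (f x0).toReal| ≤ ℓ * ‖x - x0‖)
    (hcoer : ∀ x : X, m * ‖x‖ ≤ φ x) :
    {w : X | f w + ((φ (w - x0) : ℝ) : EReal) = (g x0 : EReal)} = {x0} ∧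
    ∀ w : ℕ → X,
      Tendsto (fun k => f (w k) + ((φ (w k - x0) : ℝ) : EReal)) atTop (𝓝 ((g x0 : ℝ) : EReal)) →
      Tendsto w atTop (𝓝 x0) :=
  stmt_4_general f φ g hfbot hφ0 x0 hx0 ℓ m hlm hcalm hcoer
end

section
/- Suppose φ(0)=0, φ is coercive on X with constant m>0 (m‖x‖ ≤ φ(x) for all x), and f is Lipschitz continuous on dom f with constant ℓ where 0 ≤ ℓ < m. Then S₀ := {x : (f⊕φ)(x) = f(x)} equals {x ∈ X : P(x) = {x}}, where P(x) := {w : f(w)+φ(w−x) = (f⊕φ)(x)}. -/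
open Filter Topology Set Bornology

variable {X : Type*} [NormedAddCommGroup X] [NormedSpace ℝ X]

theorem EReal.eq_coe_sub_of_add_coe_eq_coe {a : EReal} {r s : ℝ} (h : a + r = s) :
    a = ((s - r : ℝ) : EReal) := by
  induction a using EReal.rec with
  | bot => simp at h
  | coe a =>
    rw [← EReal.coe_add, EReal.coe_eq_coe_iff] at h
    rw [EReal.coe_eq_coe_iff]
    linarith
  | top => simp at h

section Uniqueness

variable {E : Type*} [NormedAddCommGroup E] {F φ : E → ℝ} {ℓ m : ℝ} {x w : E}

theorem lt_add_of_lipschitz_of_coercive (hlm : ℓ < m) (hcoer : ∀ d, m * ‖d‖ ≤ φ d)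
    (hLip : |F x - F w| ≤ ℓ * ‖x - w‖) (hwx : w ≠ x) : F x < F w + φ (w - x) := by
  have hpos : 0 < ‖w - x‖ := norm_pos_iff.mpr (sub_ne_zero.mpr hwx)
  rw [norm_sub_rev] at hLip
  calc F x ≤ F w + ℓ * ‖w - x‖ := by linarith [(abs_le.mp hLip).2]
    _ < F w + m * ‖w - x‖ := by gcongr
    _ ≤ F w + φ (w - x) := by linarith [hcoer (w - x)]

theorem eq_of_add_eq_of_lipschitz_of_coercive {f : E → EReal} {c : ℝ} (hlm : ℓ < m)
    (hcoer : ∀ d, m * ‖d‖ ≤ φ d)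
    (hLip : ∀ x y, f x ≠ ⊤ → f y ≠ ⊤ → |(f x).toReal - (f y).toReal| ≤ ℓ * ‖x - y‖)
    (hx : f x = c) (hw : f w + ((φ (w - x) : ℝ) : EReal) = c) : w = x := by
  have hw' := EReal.eq_coe_sub_of_add_coe_eq_coe hw
  by_contra hwx
  have hlt := lt_add_of_lipschitz_of_coercive (F := fun y ↦ (f y).toReal) hlm hcoer
    (hLip x w (by simp [hx]) (by rw [hw']; exact EReal.coe_ne_top _)) hwx
  simp only [hx, hw', EReal.toReal_coe] at hlt
  linarith

end Uniqueness

theorem stmt_5_general (f : X → EReal) (φ : X → ℝ) (g : X → ℝ)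
    (hφ0 : φ 0 = 0)
    (ℓ m : ℝ) (hlm : ℓ < m)
    (hcoer : ∀ x : X, m * ‖x‖ ≤ φ x)
    (hLip : ∀ x y : X, f x ≠ ⊤ → f y ≠ ⊤ → |(f x).toReal - (f y).toReal| ≤ ℓ * ‖x - y‖) :
    {x : X | (g x : EReal) = f x} =
      {x : X | {w : X | f w + ((φ (w - x) : ℝ) : EReal) = (g x : EReal)} = {x}} := by
  have self_mem_iff : ∀ x, f x + ((φ (x - x) : ℝ) : EReal) = g x ↔ (g x : EReal) = f x := by
    simp [hφ0, eq_comm]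
  ext x
  constructor
  · intro hx
    ext w
    refine ⟨fun hw ↦ eq_of_add_eq_of_lipschitz_of_coercive hlm hcoer hLip hx.symm hw, ?_⟩
    rintro rfl
    exact (self_mem_iff w).mpr hx
  · intro hP
    exact (self_mem_iff x).mp ((Set.ext_iff.mp hP x).mpr rfl)

/-- `S₀` coincides with the set of points whose projection set is `{x}`. -/
theorem stmt_5 [CompleteSpace X] (f : X → EReal) (φ : X → ℝ) (g : X → ℝ)
    (hfbot : ∀ x, f x ≠ ⊥) (hφpos : ∀ x, 0 ≤ φ x) (hφ0 : φ 0 = 0)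
    (hg : ∀ x, (g x : EReal) = infConv f φ x)
    (ℓ m : ℝ) (hℓ : 0 ≤ ℓ) (hm : 0 < m) (hlm : ℓ < m)
    (hcoer : ∀ x : X, m * ‖x‖ ≤ φ x)
    (hLip : ∀ x y : X, f x ≠ ⊤ → f y ≠ ⊤ → |(f x).toReal - (f y).toReal| ≤ ℓ * ‖x - y‖) :
    {x : X | (g x : EReal) = f x} =
      {x : X | {w : X | f w + ((φ (w - x) : ℝ) : EReal) = (g x : EReal)} = {x}} :=
  stmt_5_general f φ g hφ0 ℓ m hlm hcoer hLip
end

section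
/- Suppose φ(0)=0, φ is coercive on X with constant m>0, and f is Lipschitz continuous on dom f with constant ℓ, 0 ≤ ℓ < m. Then dom f ⊂ S₀ := {x : (f⊕φ)(x) = f(x)}. -/
open Filter Topology Set Bornology

variable {X : Type*} [NormedAddCommGroup X] [NormedSpace ℝ X]

omit [NormedSpace ℝ X] in
theorem infConv_le_self {φ : X → ℝ} (hφ0 : φ 0 = 0) (f : X → EReal) (x : X) :
    infConv f φ x ≤ f x := by
  unfold infConv
  simpa [hφ0] using iInf_le (fun w => f w + ((φ (w - x) : ℝ) : EReal)) x

omit [NormedSpace ℝ X] in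
theorem le_infConv_of_forall_ne_top {f : X → EReal} {φ : X → ℝ} {x : X}
    (h : ∀ w, f w ≠ ⊤ → f x ≤ f w + ((φ (w - x) : ℝ) : EReal)) : f x ≤ infConv f φ x := by
  refine le_iInf fun w => ?_
  by_cases hw : f w = ⊤
  · simp [hw]
  · exact h w hw

theorem stmt_6_general (f : X → EReal) (φ : X → ℝ) (g : X → ℝ)
    (hfbot : ∀ x, f x ≠ ⊥) (hφ0 : φ 0 = 0)
    (hg : ∀ x, (g x : EReal) = infConv f φ x)
    (ℓ m : ℝ) (hlm : ℓ < m)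
    (hcoer : ∀ x : X, m * ‖x‖ ≤ φ x)
    (hLip : ∀ x y : X, f x ≠ ⊤ → f y ≠ ⊤ → |(f x).toReal - (f y).toReal| ≤ ℓ * ‖x - y‖) :
    {x : X | f x ≠ ⊤} ⊆ {x : X | (g x : EReal) = f x} := by
  intro x hx
  change (g x : EReal) = f x
  rw [hg]
  refine le_antisymm (infConv_le_self hφ0 f x) (le_infConv_of_forall_ne_top fun w hw => ?_)
  have hxw : (f x).toReal - (f w).toReal ≤ ℓ * ‖w - x‖ := by
    rw [norm_sub_rev]
    exact (abs_le.mp (hLip x w hx hw)).2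
  rw [← EReal.coe_toReal hx (hfbot x), ← EReal.coe_toReal hw (hfbot w), ← EReal.coe_add,
    EReal.coe_le_coe_iff]
  calc (f x).toReal ≤ (f w).toReal + ℓ * ‖w - x‖ := by linarith
    _ ≤ (f w).toReal + m * ‖w - x‖ := by gcongr
    _ ≤ (f w).toReal + φ (w - x) := by gcongr; exact hcoer _

/-- `dom f ⊂ S₀`. -/
theorem stmt_6 [CompleteSpace X] (f : X → EReal) (φ : X → ℝ) (g : X → ℝ)
    (hfbot : ∀ x, f x ≠ ⊥) (hφpos : ∀ x, 0 ≤ φ x) (hφ0 : φ 0 = 0)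
    (hg : ∀ x, (g x : EReal) = infConv f φ x)
    (ℓ m : ℝ) (hℓ : 0 ≤ ℓ) (hm : 0 < m) (hlm : ℓ < m)
    (hcoer : ∀ x : X, m * ‖x‖ ≤ φ x)
    (hLip : ∀ x y : X, f x ≠ ⊤ → f y ≠ ⊤ → |(f x).toReal - (f y).toReal| ≤ ℓ * ‖x - y‖) :
    {x : X | f x ≠ ⊤} ⊆ {x : X | (g x : EReal) = f x} :=
  stmt_6_general f φ g hfbot hφ0 hg ℓ m hlm hcoer hLip
end

section
/- Suppose φ is subadditive and positively homogeneous, and x̄ ∈ X satisfies P(x̄) ≠ ∅. Then for every ε ≥ 0, ∂̂_ε(f⊕φ)(x̄) ⊂ ⋂_{w ∈ P(x̄)} ⋂_{t ∈ (0,1]} ( ∂̂_ε(f⊕φ)(tw+(1−t)x̄) ∩ [−∂̂_ε φ(w−x̄)] ). -/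
open Filter Topology Set Bornology

variable {X : Type*} [NormedAddCommGroup X] [NormedSpace ℝ X]

/-!
Subadditivity of `φ` gives `g x ≤ g y + φ (y - x)` for `g = f ⊕ φ`, and a minimizer `w` at `x0`
gives `g y + φ (w - x0) ≤ g x0 + φ (w - y)`. On the segment from `x0` to `w` positive homogeneity
makes `φ` additive, so `g x_t + φ (x_t - x0) ≤ g x0`: near `x_t`, `g` dominates the translate of
`g` near `x0` up to a constant, and near `w - x0`, `φ` dominates `u ↦ g (w - u)` up to a constant.
An `ε`-Fréchet subgradient is transported along both comparisons, since translations and `u ↦ -u`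
are isometries.
-/

section FrechetSubdiff

variable {Y : Type*} [NormedAddCommGroup Y] [NormedSpace ℝ Y]

theorem comp_mem_frechetSubdiff {g : X → ℝ} {h : Y → ℝ} {ε : ℝ} {x0 : X} {y0 : Y}
    {p : X →L[ℝ] ℝ} (hp : p ∈ frechetSubdiff g ε x0) (L : Y →ₗᵢ[ℝ] X)
    (hle : ∀ y, g (x0 + L (y - y0)) - g x0 ≤ h y - h y0) :
    p.comp L.toContinuousLinearMap ∈ frechetSubdiff h ε y0 := by
  intro η hη
  have hmap : Tendsto (fun y => x0 + L (y - y0)) (𝓝 y0) (𝓝 x0) :=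
    (by fun_prop : Continuous fun y => x0 + L (y - y0)).tendsto' y0 x0 (by simp)
  filter_upwards [hmap.eventually (hp η hη)] with y hy
  simp only [add_sub_cancel_left, LinearIsometry.norm_map] at hy
  have := hle y
  simp only [ContinuousLinearMap.comp_apply, LinearIsometry.coe_toContinuousLinearMap]
  linarith

end FrechetSubdiff

section PosHomogeneous

variable {M : Type*} [AddCommGroup M] [Module ℝ M] {φ : M → ℝ}

theorem map_zero_of_posHomogeneous (hpos : ∀ t : ℝ, 0 < t → ∀ x : M, φ (t • x) = t * φ x) :
    φ 0 = 0 := by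
  have h := hpos 2 two_pos 0
  rw [smul_zero] at h
  linarith

theorem map_smul_of_nonneg (hpos : ∀ t : ℝ, 0 < t → ∀ x : M, φ (t • x) = t * φ x)
    {t : ℝ} (ht : 0 ≤ t) (x : M) : φ (t • x) = t * φ x := by
  rcases ht.eq_or_lt with rfl | ht
  · rw [zero_smul, zero_mul, map_zero_of_posHomogeneous hpos]
  · exact hpos t ht x

end PosHomogeneous

section InfConv

variable {E : Type*} [NormedAddCommGroup E] {f : E → EReal} {φ : E → ℝ} {g : E → ℝ}

theorem le_add_of_eq_infConv (hg : ∀ x, (g x : EReal) = infConv f φ x)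
    (hsub : ∀ x y : E, φ (x + y) ≤ φ x + φ y) (x y : E) : g x ≤ g y + φ (y - x) := by
  suffices ((g x - φ (y - x) : ℝ) : EReal) ≤ g y by
    exact sub_le_iff_le_add.1 (EReal.coe_le_coe_iff.1 this)
  rw [hg y]
  refine le_iInf fun v => (EReal.addLECancellable_coe (φ (y - x))).add_le_add_iff_right.1 ?_
  calc ((g x - φ (y - x) : ℝ) : EReal) + φ (y - x) = g x := by norm_cast; ring
    _ ≤ f v + φ (v - x) := (hg x).trans_le (iInf_le _ v)
    _ ≤ f v + φ (v - y) + φ (y - x) := by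
      rw [add_assoc, ← EReal.coe_add]
      gcongr
      simpa using hsub (v - y) (y - x)

theorem add_le_add_of_eq_infConv (hg : ∀ x, (g x : EReal) = infConv f φ x) {x0 w : E}
    (hw : f w + ((φ (w - x0) : ℝ) : EReal) = (g x0 : EReal)) (y : E) :
    g y + φ (w - x0) ≤ g x0 + φ (w - y) := by
  have : (g y : EReal) + φ (w - x0) ≤ g x0 + φ (w - y) :=
    calc (g y : EReal) + φ (w - x0) ≤ f w + φ (w - y) + φ (w - x0) := by
          gcongr; exact (hg y).trans_le (iInf_le _ w)
      _ = g x0 + φ (w - y) := by rw [add_right_comm, hw]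
  exact_mod_cast this

end InfConv

theorem mem_frechetSubdiff_of_add_le {f : X → EReal} {φ : X → ℝ} {g : X → ℝ}
    (hg : ∀ x, (g x : EReal) = infConv f φ x) (hsub : ∀ x y : X, φ (x + y) ≤ φ x + φ y)
    {ε : ℝ} {x0 y : X} {p : X →L[ℝ] ℝ} (hp : p ∈ frechetSubdiff g ε x0)
    (hy : g y + φ (y - x0) ≤ g x0) : p ∈ frechetSubdiff g ε y := by
  have := comp_mem_frechetSubdiff (h := g) (y0 := y) hp (LinearIsometry.id (R := ℝ)) fun x => by
    have h := le_add_of_eq_infConv hg hsub (x0 + (x - y)) x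
    rw [show x - (x0 + (x - y)) = y - x0 by abel] at h
    rw [LinearIsometry.id_apply]
    linarith
  rwa [LinearIsometry.id_toContinuousLinearMap, p.comp_id] at this

theorem neg_mem_frechetSubdiff_of_eq_infConv {f : X → EReal} {φ : X → ℝ} {g : X → ℝ}
    (hg : ∀ x, (g x : EReal) = infConv f φ x) {ε : ℝ} {x0 w : X} {p : X →L[ℝ] ℝ}
    (hp : p ∈ frechetSubdiff g ε x0) (hw : f w + ((φ (w - x0) : ℝ) : EReal) = (g x0 : EReal)) :
    -p ∈ frechetSubdiff φ ε (w - x0) := by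
  have := comp_mem_frechetSubdiff (h := φ) (y0 := w - x0) hp
    (LinearIsometryEquiv.neg ℝ).toLinearIsometry fun u => by
    have h := add_le_add_of_eq_infConv hg hw (w - u)
    rw [sub_sub_cancel] at h
    simp only [LinearIsometryEquiv.coe_toLinearIsometry, LinearIsometryEquiv.coe_neg]
    rw [show x0 + -(u - (w - x0)) = w - u by abel]
    linarith
  convert this using 1
  ext
  simp

theorem add_le_of_mem_segment {f : X → EReal} {φ : X → ℝ} {g : X → ℝ}
    (hg : ∀ x, (g x : EReal) = infConv f φ x)
    (hpos : ∀ t : ℝ, 0 < t → ∀ x : X, φ (t • x) = t * φ x) {x0 w : X}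
    (hw : f w + ((φ (w - x0) : ℝ) : EReal) = (g x0 : EReal)) {t : ℝ} (ht0 : 0 ≤ t) (ht1 : t ≤ 1) :
    g (t • w + (1 - t) • x0) + φ (t • w + (1 - t) • x0 - x0) ≤ g x0 := by
  have h := add_le_add_of_eq_infConv hg hw (t • w + (1 - t) • x0)
  rw [show w - (t • w + (1 - t) • x0) = (1 - t) • (w - x0) by module,
    map_smul_of_nonneg hpos (sub_nonneg.2 ht1)] at h
  rw [show t • w + (1 - t) • x0 - x0 = t • (w - x0) by module, map_smul_of_nonneg hpos ht0]
  linarith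

theorem stmt_9_general (f : X → EReal) (φ : X → ℝ) (g : X → ℝ)
    (hsub : ∀ x y : X, φ (x + y) ≤ φ x + φ y)
    (hpos : ∀ t : ℝ, 0 < t → ∀ x : X, φ (t • x) = t * φ x)
    (hg : ∀ x, (g x : EReal) = infConv f φ x)
    (ε : ℝ) (x0 : X) :
    ∀ p ∈ frechetSubdiff g ε x0, ∀ w : X,
      f w + ((φ (w - x0) : ℝ) : EReal) = (g x0 : EReal) →
      ∀ t : ℝ, 0 < t → t ≤ 1 →
        p ∈ frechetSubdiff g ε (t • w + (1 - t) • x0) ∧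
        -p ∈ frechetSubdiff φ ε (w - x0) := by
  intro p hp w hw t ht0 ht1
  exact ⟨mem_frechetSubdiff_of_add_le hg hsub hp (add_le_of_mem_segment hg hpos hw ht0.le ht1),
    neg_mem_frechetSubdiff_of_eq_infConv hg hp hw⟩

/-- ε-Fréchet subdifferential estimate along the segment. -/
theorem stmt_9 [CompleteSpace X] (f : X → EReal) (φ : X → ℝ) (g : X → ℝ)
    (hfbot : ∀ x, f x ≠ ⊥) (hφpos : ∀ x, 0 ≤ φ x)
    (hsub : ∀ x y : X, φ (x + y) ≤ φ x + φ y)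
    (hpos : ∀ t : ℝ, 0 < t → ∀ x : X, φ (t • x) = t * φ x)
    (hg : ∀ x, (g x : EReal) = infConv f φ x)
    (ε : ℝ) (hε : 0 ≤ ε) (x0 : X)
    (hPne : ∃ w : X, f w + ((φ (w - x0) : ℝ) : EReal) = (g x0 : EReal)) :
    ∀ p ∈ frechetSubdiff g ε x0, ∀ w : X,
      f w + ((φ (w - x0) : ℝ) : EReal) = (g x0 : EReal) →
      ∀ t : ℝ, 0 < t → t ≤ 1 →
        p ∈ frechetSubdiff g ε (t • w + (1 - t) • x0) ∧
        -p ∈ frechetSubdiff φ ε (w - x0) :=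
  stmt_9_general f φ g hsub hpos hg ε x0
end

section
/- Suppose φ: X → [0,∞) is lower semicontinuous. Let ε > 0, η > 0, x̄ ∈ X, and x* ∈ ∂̂_ε(f⊕φ)(x̄). Then there exist w̃ ∈ X with f(w̃)+φ(w̃−x̄) < (f⊕φ)(x̄)+η² and w̄ ∈ X such that ‖w̄−w̃‖ < η and x* ∈ −∂̂_{ε+η} φ(w̄−x̄). -/
/-!
Let `w̃` almost attain the infimum defining `(f ⊕ φ)(x̄)` and `ũ = w̃ - x̄`. Since `w̃` is admissible
in the infimum defining `(f ⊕ φ)(w̃ - u)`, the subgradient inequality of `x*` at `x̄` says that `ũ`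
almost minimises `φ + ⟨x*, · - ũ⟩ + (ε + η/2)‖· - ũ‖` on a small closed ball. Ekeland's variational
principle on that ball yields a point `ū` close to `ũ`, hence interior to the ball, which minimises
this function plus `(η/2)‖· - ū‖`; this local minimality is exactly `-x* ∈ ∂̂_{ε+η} φ(ū)`, and
`w̄ = ū + x̄`.
-/

open Filter Topology Set Bornology

variable {X : Type*} [NormedAddCommGroup X] [NormedSpace ℝ X]

section Ekeland

variable {M : Type*} [MetricSpace M]

theorem exists_iInter_eq_singleton_of_dist_le [CompleteSpace M] {T : ℕ → Set M} {v : ℕ → M}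
    {r : ℕ → ℝ} (hT : Antitone T) (hclosed : ∀ n, IsClosed (T n)) (hv : ∀ n, v n ∈ T n)
    (hr : ∀ n, ∀ x ∈ T n, dist x (v n) ≤ r n) (hr0 : Tendsto r atTop (𝓝 0)) :
    ∃ x, ⋂ n, T n = {x} := by
  have tendsto_of_mem : ∀ x ∈ ⋂ n, T n, Tendsto v atTop (𝓝 x) := fun x hx =>
    tendsto_iff_dist_tendsto_zero.2 <| squeeze_zero (fun _ => dist_nonneg)
      (fun n => dist_comm (v n) x ▸ hr n x (mem_iInter.1 hx n)) hr0
  have hv_cauchy : CauchySeq v :=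
    cauchySeq_of_le_tendsto_0' r (fun n m hnm => dist_comm (v n) (v m) ▸ hr n _ (hT hnm (hv m)))
      hr0
  obtain ⟨x, hx⟩ := cauchySeq_tendsto_of_complete hv_cauchy
  have hx_mem : x ∈ ⋂ n, T n := mem_iInter.2 fun n =>
    (hclosed n).mem_of_tendsto hx (eventually_atTop.2 ⟨n, fun m hm => hT hm (hv m)⟩)
  exact ⟨x, eq_singleton_iff_unique_mem.2
    ⟨hx_mem, fun y hy => tendsto_nhds_unique (tendsto_of_mem y hy) hx⟩⟩

variable {ψ : M → ℝ} {α : ℝ}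

/-- The points that `v` dominates in the order underlying Ekeland's variational principle. -/
def ekelandSet (ψ : M → ℝ) (α : ℝ) (v : M) : Set M :=
  {u | ψ u + α * dist u v ≤ ψ v}

theorem self_mem_ekelandSet (v : M) : v ∈ ekelandSet ψ α v := by
  simp [ekelandSet]

theorem ekelandSet_subset (hα : 0 ≤ α) {u v : M} (h : u ∈ ekelandSet ψ α v) :
    ekelandSet ψ α u ⊆ ekelandSet ψ α v := fun x hx => by
  have := mul_le_mul_of_nonneg_left (dist_triangle x u v) hα
  simp only [ekelandSet, mem_ofPred_eq] at *
  linarith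

theorem isClosed_ekelandSet (hψ : LowerSemicontinuous ψ) (v : M) :
    IsClosed (ekelandSet ψ α v) :=
  (hψ.add (continuous_const.mul (continuous_id.dist continuous_const)).lowerSemicontinuous
    ).isClosed_preimage (ψ v)

theorem exists_mem_ekelandSet_le_add (hbdd : BddBelow (range ψ)) (v : M) {δ : ℝ} (hδ : 0 < δ) :
    ∃ u ∈ ekelandSet ψ α v, ∀ x ∈ ekelandSet ψ α v, ψ u ≤ ψ x + δ := by
  have hne : (ψ '' ekelandSet ψ α v).Nonempty := ⟨ψ v, v, self_mem_ekelandSet v, rfl⟩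
  obtain ⟨_, ⟨u, hu, rfl⟩, hlt⟩ := Real.lt_sInf_add_pos hne hδ
  refine ⟨u, hu, fun x hx => ?_⟩
  have := csInf_le (hbdd.mono (image_subset_range _ _)) (mem_image_of_mem ψ hx)
  linarith

theorem exists_ekeland_seq (hbdd : BddBelow (range ψ)) (hα : 0 < α) (u₀ : M) :
    ∃ w : ℕ → M, w 0 = u₀ ∧ ∀ n, w (n + 1) ∈ ekelandSet ψ α (w n) ∧
      ∀ x ∈ ekelandSet ψ α (w n), ψ (w (n + 1)) ≤ ψ x + α / (n + 1) := by
  choose next hnext using fun (n : ℕ) (v : M) =>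
    exists_mem_ekelandSet_le_add (α := α) hbdd v (by positivity : 0 < α / (n + 1))
  exact ⟨fun n => Nat.rec u₀ next n, rfl, fun n => hnext n _⟩

theorem exists_ekeland_point [CompleteSpace M] (hψ : LowerSemicontinuous ψ)
    (hbdd : BddBelow (range ψ)) (hα : 0 < α) (u₀ : M) :
    ∃ x, ψ x + α * dist x u₀ ≤ ψ u₀ ∧ ∀ u, ψ x ≤ ψ u + α * dist u x := by
  obtain ⟨w, hw0, hstep⟩ := exists_ekeland_seq hbdd hα u₀
  have hnest : Antitone fun n => ekelandSet ψ α (w n) :=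
    antitone_nat_of_succ_le fun n => ekelandSet_subset hα.le (hstep n).1
  have hradius : ∀ n, ∀ x ∈ ekelandSet ψ α (w (n + 1)), dist x (w (n + 1)) ≤ 1 / (n + 1) := by
    intro n x hx
    have hmin := (hstep n).2 x (ekelandSet_subset hα.le (hstep n).1 hx)
    have : α * dist x (w (n + 1)) ≤ α * (1 / (n + 1)) := by
      simp only [ekelandSet, mem_ofPred_eq] at hx
      rw [mul_one_div]
      linarith
    exact le_of_mul_le_mul_left this hα
  obtain ⟨x, hx⟩ := exists_iInter_eq_singleton_of_dist_le (fun _ _ h => hnest (by omega))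
    (fun n => isClosed_ekelandSet hψ _) (fun n => self_mem_ekelandSet _) hradius
    tendsto_one_div_add_atTop_nhds_zero_nat
  have hx_mem : ∀ n, x ∈ ekelandSet ψ α (w (n + 1)) := mem_iInter.1 (hx ▸ mem_singleton x)
  refine ⟨x, hw0 ▸ hnest (Nat.zero_le 1) (hx_mem 0), fun u => ?_⟩
  by_contra! hlt
  -- `u` would be dominated by `x`, hence by every `w n`, so it would be `x` itself
  have hu : u ∈ ⋂ n, ekelandSet ψ α (w (n + 1)) := mem_iInter.2 fun n =>
    ekelandSet_subset hα.le (hx_mem n) (show ψ u + α * dist u x ≤ ψ x from hlt.le)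
  rw [hx, mem_singleton_iff] at hu
  subst hu
  simp at hlt

theorem exists_ekeland_point_of_isClosed [CompleteSpace M] {s : Set M} (hs : IsClosed s)
    (hψ : LowerSemicontinuous ψ) (hα : 0 < α) {x₀ : M} (hx₀ : x₀ ∈ s) {σ : ℝ}
    (hmin : ∀ u ∈ s, ψ x₀ ≤ ψ u + σ) :
    ∃ x ∈ s, α * dist x x₀ ≤ σ ∧ ∀ u ∈ s, ψ x ≤ ψ u + α * dist u x := by
  have := hs.completeSpace_coe
  have hbdd : BddBelow (range (ψ ∘ Subtype.val : s → ℝ)) :=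
    ⟨ψ x₀ - σ, by rintro _ ⟨u, rfl⟩; simp only [Function.comp_apply]; linarith [hmin u u.2]⟩
  obtain ⟨x, hx0, hx⟩ := exists_ekeland_point (hψ.comp continuous_subtype_val) hbdd hα ⟨x₀, hx₀⟩
  refine ⟨x, x.2, ?_, fun u hu => hx ⟨u, hu⟩⟩
  have := hmin x x.2
  simp only [Function.comp_apply, Subtype.dist_eq] at hx0
  linarith

end Ekeland

theorem exists_lt_of_infConv_lt {E : Type*} [NormedAddCommGroup E] {f : E → EReal} {φ : E → ℝ}
    (hf : ∀ x, f x ≠ ⊥) {x : E} {c : ℝ}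
    (h : infConv f φ x < c) : ∃ w : E, ∃ a : ℝ, f w = a ∧ a + φ (w - x) < c := by
  obtain ⟨w, hw⟩ := iInf_lt_iff.1 h
  have hf_top : f w ≠ ⊤ := by
    rintro hw_top
    rw [hw_top, EReal.top_add_of_ne_bot (EReal.coe_ne_bot _)] at hw
    exact not_top_lt hw
  refine ⟨w, (f w).toReal, (EReal.coe_toReal hf_top (hf w)).symm, ?_⟩
  rw [← EReal.coe_lt_coe_iff, EReal.coe_add, EReal.coe_toReal hf_top (hf w)]
  exact hw

theorem infConv_le_of_eq {E : Type*} [NormedAddCommGroup E] {f : E → EReal} {φ : E → ℝ} {w : E}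
    {a : ℝ} (hfa : f w = a) (x : E) :
    infConv f φ x ≤ ((a + φ (w - x) : ℝ) : EReal) :=
  (iInf_le _ w).trans_eq (by rw [hfa, EReal.coe_add])

theorem le_add_of_dist_lt_of_infConv_lt {f : X → EReal} {φ g : X → ℝ}
    (hg : ∀ x, (g x : EReal) = infConv f φ x) {p : X →L[ℝ] ℝ} {x₀ w : X} {a κ δ σ : ℝ}
    (hp : ∀ x, dist x x₀ < δ → p (x - x₀) ≤ g x - g x₀ + κ * ‖x - x₀‖)
    (hfa : f w = a) (hw : a + φ (w - x₀) < g x₀ + σ) {u : X} (hu : dist u (w - x₀) < δ) :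
    φ (w - x₀) ≤ φ u + p (u - (w - x₀)) + κ * ‖u - (w - x₀)‖ + σ := by
  have hshift : w - u - x₀ = -(u - (w - x₀)) := by abel
  have hx : dist (w - u) x₀ < δ := by rwa [dist_eq_norm, hshift, norm_neg, ← dist_eq_norm]
  have hsub := hp _ hx
  have hg_le : g (w - u) ≤ a + φ u := by
    have := (hg (w - u)).trans_le (infConv_le_of_eq hfa (w - u))
    rw [sub_sub_cancel] at this
    exact_mod_cast this
  rw [hshift, map_neg, norm_neg] at hsub
  linarith

theorem neg_mem_frechetSubdiff_of_eventually_le {φ : X → ℝ} {p : X →L[ℝ] ℝ} {a x : X} {κ α : ℝ}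
    (hκ : 0 ≤ κ)
    (h : ∀ᶠ u in 𝓝 x, φ x + p (x - a) + κ * ‖x - a‖ ≤ φ u + p (u - a) + κ * ‖u - a‖ + α * ‖u - x‖) :
    -p ∈ frechetSubdiff φ (κ + α) x := by
  intro η hη
  filter_upwards [h] with u hu
  have hp : p (u - a) - p (x - a) = p (u - x) := by rw [← map_sub, sub_sub_sub_cancel_right]
  have htri := mul_le_mul_of_nonneg_left (norm_sub_le_norm_sub_add_norm_sub u x a) hκ
  have := mul_nonneg hη.le (norm_nonneg (u - x))
  simp only [neg_apply]
  linarith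

theorem stmt_10_general [CompleteSpace X] (f : X → EReal) (φ : X → ℝ) (g : X → ℝ)
    (hfbot : ∀ x, f x ≠ ⊥)
    (hφlsc : LowerSemicontinuous φ)
    (hg : ∀ x, (g x : EReal) = infConv f φ x)
    (ε η : ℝ) (hε : 0 < ε) (hη : 0 < η) (x0 : X)
    (p : X →L[ℝ] ℝ) (hp : p ∈ frechetSubdiff g ε x0) :
    ∃ wt w0 : X,
      f wt + ((φ (wt - x0) : ℝ) : EReal) < (g x0 : EReal) + ((η ^ 2 : ℝ) : EReal) ∧
      ‖w0 - wt‖ < η ∧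
      -p ∈ frechetSubdiff φ (ε + η) (w0 - x0) := by
  obtain ⟨δ, hδ, hball⟩ := Metric.eventually_nhds_iff.1 (hp (η / 2) (by positivity))
  set r := min (δ / 2) η
  have hr : 0 < r := lt_min (by positivity) hη
  have hrδ : r < δ := (min_le_left _ _).trans_lt (by linarith)
  have hrη : r ≤ η := min_le_right _ _
  obtain ⟨w, a, hfa, hw⟩ := exists_lt_of_infConv_lt hfbot (x := x0) (c := g x0 + η * r / 4)
    (by rw [← hg]; exact_mod_cast (by nlinarith : g x0 < g x0 + η * r / 4))
  set u₀ := w - x0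
  set ψ := fun u => φ u + p (u - u₀) + (ε + η / 2) * ‖u - u₀‖
  have hψ : LowerSemicontinuous ψ :=
    (hφlsc.add (by fun_prop : Continuous fun u => p (u - u₀)).lowerSemicontinuous).add
      (by fun_prop : Continuous fun u => (ε + η / 2) * ‖u - u₀‖).lowerSemicontinuous
  have hmin : ∀ u ∈ Metric.closedBall u₀ r, ψ u₀ ≤ ψ u + η * r / 4 := fun u hu => by
    simp only [ψ, sub_self, map_zero, norm_zero, mul_zero, add_zero]
    exact le_add_of_dist_lt_of_infConv_lt hg hball hfa hw (hu.trans_lt hrδ)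
  obtain ⟨x, -, hx_near, hx_min⟩ := exists_ekeland_point_of_isClosed Metric.isClosed_closedBall hψ
    (by positivity : 0 < η / 2) (Metric.mem_closedBall_self hr.le) hmin
  have hx_dist : dist x u₀ ≤ r / 2 := by nlinarith
  refine ⟨w, x + x0, ?_, ?_, ?_⟩
  · rw [hfa]
    exact_mod_cast (by nlinarith : a + φ u₀ < g x0 + η ^ 2)
  · rw [show x + x0 - w = x - (w - x0) by abel, ← dist_eq_norm]
    linarith
  · rw [add_sub_cancel_right, show ε + η = (ε + η / 2) + η / 2 by ring]
    refine neg_mem_frechetSubdiff_of_eventually_le (a := u₀) (by positivity) ?_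
    have hball_mem : Metric.closedBall u₀ r ∈ 𝓝 x := Metric.closedBall_mem_nhds_of_mem
      (Metric.mem_ball.2 (by linarith))
    filter_upwards [hball_mem] with u hu
    simpa [ψ, dist_eq_norm] using hx_min u hu

/-- approximate projections carry approximate subgradients of `φ`. -/
theorem stmt_10 [CompleteSpace X] (f : X → EReal) (φ : X → ℝ) (g : X → ℝ)
    (hfbot : ∀ x, f x ≠ ⊥) (hφpos : ∀ x, 0 ≤ φ x)
    (hφlsc : LowerSemicontinuous φ)
    (hg : ∀ x, (g x : EReal) = infConv f φ x)
    (ε η : ℝ) (hε : 0 < ε) (hη : 0 < η) (x0 : X)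
    (p : X →L[ℝ] ℝ) (hp : p ∈ frechetSubdiff g ε x0) :
    ∃ wt w0 : X,
      f wt + ((φ (wt - x0) : ℝ) : EReal) < (g x0 : EReal) + ((η ^ 2 : ℝ) : EReal) ∧
      ‖w0 - wt‖ < η ∧
      -p ∈ frechetSubdiff φ (ε + η) (w0 - x0) :=
  stmt_10_general f φ g hfbot hφlsc hg ε η hε hη x0 p hp
end

section
/- In the setting where X is finite dimensional, x̄ ∈ S₀, φ is coercive with constant m > 0, subadditive, positively homogeneous, continuous at 0 with φ(0)=0, and f is lower semicontinuous on X and Lipschitz continuous on dom f with constant 0 ≤ ℓ < m, the limiting subdifferential satisfies the equality ∂(f⊕φ)(x̄) = ∂f(x̄) ∩ [−∂φ(0)]. -/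
open Filter Topology Set Bornology

variable {X : Type*} [NormedAddCommGroup X] [NormedSpace ℝ X]

/-!
Because `ℓ < m`, coercivity of `φ` beats the Lipschitz variation of `f`: the infimum defining
`g = f ⊕ φ` is attained, `g = f` on `dom f`, and a minimizer `w` for `u` lies within
`C * ‖u - x‖` of `u` for every `x ∈ dom f`, where `C = (M + ℓ) / (m - ℓ)` and `φ ≤ M * ‖·‖`.

`⊆`: along `x k → x₀` the minimizers satisfy `w k - x k → 0`; a Fréchet subgradient `q` of `g`
at `x k` is one of `f` at `w k`, and `-q` is one of `φ` at `w k - x k`.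

`⊇`: by sublinearity `-p ∈ ∂φ(0)` forces `-p ≤ φ`. In finite dimensions the approximating
subgradients `q k` of `f` converge to `p` in norm, and splitting
`q k (u - x k) = q k (w - x k) + (q k - p) (u - w) - p (w - u)` at a minimizer `w` for `u`
makes `q k` an `(ε k * (1 + C) + C * ‖q k - p‖)`-subgradient of `g` at `x k`.
-/

theorem le_add_mul_norm_sub_of_le_mul_norm {E : Type*} [SeminormedAddCommGroup E] {ψ : E → ℝ}
    (hsub : ∀ x y : E, ψ (x + y) ≤ ψ x + ψ y) {M : ℝ} (hM : ∀ z, ψ z ≤ M * ‖z‖) (a b : E) :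
    ψ a ≤ ψ b + M * ‖a - b‖ := by
  have := hsub b (a - b)
  rw [add_sub_cancel] at this
  linarith [hM (a - b)]

theorem continuous_of_le_mul_norm {E : Type*} [SeminormedAddCommGroup E] {ψ : E → ℝ}
    (hsub : ∀ x y : E, ψ (x + y) ≤ ψ x + ψ y) {M : ℝ} (hM : ∀ z, ψ z ≤ M * ‖z‖) :
    Continuous ψ :=
  (LipschitzWith.of_le_add_mul' M fun a b => by
    simpa [dist_eq_norm] using le_add_mul_norm_sub_of_le_mul_norm hsub hM a b).continuous

theorem EReal.coe_le_sub_add_coe_iff {a b : EReal} (ha : a ≠ ⊤) (ha' : a ≠ ⊥) (hb : b ≠ ⊤)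
    (hb' : b ≠ ⊥) (r s : ℝ) : (r : EReal) ≤ a - b + s ↔ r ≤ a.toReal - b.toReal + s := by
  rw [← EReal.coe_toReal ha ha', ← EReal.coe_toReal hb hb', ← EReal.coe_sub, ← EReal.coe_add,
    EReal.coe_le_coe_iff, EReal.toReal_coe, EReal.toReal_coe]

theorem ContinuousLinearMap.tendsto_of_tendsto_apply {ι F : Type*} [NormedAddCommGroup F]
    [NormedSpace ℝ F] [FiniteDimensional ℝ X] [FiniteDimensional ℝ F] {l : Filter ι}
    {q : ι → X →L[ℝ] F} {p : X →L[ℝ] F} (h : ∀ v, Tendsto (fun k => q k v) l (𝓝 (p v))) :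
    Tendsto q l (𝓝 p) := by
  let b := Module.finBasis ℝ X
  let Φ : (X →L[ℝ] F) →ₗ[ℝ] (Fin (Module.finrank ℝ X) → F) :=
    LinearMap.pi fun i => (ContinuousLinearMap.apply ℝ F (b i)).toLinearMap
  have hΦ : LinearMap.ker Φ = ⊥ := LinearMap.ker_eq_bot.2 fun q₁ q₂ h =>
    ContinuousLinearMap.coe_injective (b.ext fun i => congrFun h i)
  exact (Φ.isClosedEmbedding_of_injective hΦ).isEmbedding.tendsto_nhds_iff.2
    (tendsto_pi_nhds.2 fun i => h (b i))

theorem LowerSemicontinuous.exists_forall_le_of_isCompact_sublevel {α β : Type*}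
    [TopologicalSpace α] [LinearOrder β] {F : α → β} (hF : LowerSemicontinuous F) {K : Set α}
    (hK : IsCompact K) {b : β} (hsub : ∀ w, F w ≤ b → w ∈ K) {w₀ : α} (hw₀ : F w₀ ≤ b) :
    ∃ a, ∀ w, F a ≤ F w := by
  obtain ⟨a, -, ha⟩ := (hF.lowerSemicontinuousOn K).exists_isMinOn ⟨w₀, hsub w₀ hw₀⟩ hK
  refine ⟨a, fun w => ?_⟩
  by_cases hw : w ∈ K
  · exact ha hw
  · exact (ha (hsub w₀ hw₀)).trans (hw₀.trans (not_le.1 (mt (hsub w) hw)).le)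

theorem mem_limitingSubdiff_of_eventually {g : X → ℝ} {x₀ : X} {p : X →L[ℝ] ℝ} (x : ℕ → X)
    (ε : ℕ → ℝ) (q : ℕ → X →L[ℝ] ℝ) (hε0 : ∀ k, 0 ≤ ε k) (hε : Tendsto ε atTop (𝓝 0))
    (hx : Tendsto x atTop (𝓝 x₀)) (hgx : Tendsto (fun k => g (x k)) atTop (𝓝 (g x₀)))
    (hq : ∀ᶠ k in atTop, q k ∈ frechetSubdiff g (ε k) (x k))
    (hqp : ∀ v, Tendsto (fun k => q k v) atTop (𝓝 (p v))) : p ∈ limitingSubdiff g x₀ := by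
  obtain ⟨k₀, hk₀⟩ := eventually_atTop.1 hq
  have hshift : Tendsto (fun k => k + k₀) atTop atTop := tendsto_add_atTop_nat k₀
  exact ⟨fun k => x (k + k₀), fun k => ε (k + k₀), fun k => q (k + k₀), fun k => hε0 _,
    hε.comp hshift, hx.comp hshift, hgx.comp hshift, fun k => hk₀ _ (Nat.le_add_left _ _),
    fun v => (hqp v).comp hshift⟩

section Sublinear

variable {φ : X → ℝ}

theorem exists_le_mul_norm_of_continuousAt_zero (hφ0 : φ 0 = 0) (hφcont : ContinuousAt φ 0)
    (hpos : ∀ t : ℝ, 0 < t → ∀ x : X, φ (t • x) = t * φ x) :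
    ∃ M, 0 ≤ M ∧ ∀ z, φ z ≤ M * ‖z‖ := by
  obtain ⟨δ, hδ, hball⟩ := Metric.eventually_nhds_iff.1
    (hφcont.eventually (gt_mem_nhds (show φ 0 < 1 by rw [hφ0]; norm_num)))
  refine ⟨2 / δ, by positivity, fun z => ?_⟩
  rcases eq_or_ne z 0 with rfl | hz
  · simp [hφ0]
  have hz' : 0 < ‖z‖ := norm_pos_iff.2 hz
  have ht : 0 < 2 * ‖z‖ / δ := by positivity
  have hsmall : φ ((2 * ‖z‖ / δ)⁻¹ • z) < 1 := hball <| by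
    rw [dist_zero_right, norm_smul, norm_inv, Real.norm_of_nonneg ht.le]
    field_simp
    linarith
  calc φ z = 2 * ‖z‖ / δ * φ ((2 * ‖z‖ / δ)⁻¹ • z) := by rw [← hpos _ ht, smul_inv_smul₀ ht.ne']
    _ ≤ 2 * ‖z‖ / δ * 1 := by gcongr
    _ = 2 / δ * ‖z‖ := by ring

/-- The local inequality at `z` becomes global because `φ (z + t • v) - φ z ≤ t * φ v`. -/
theorem apply_le_add_mul_norm_of_mem_frechetSubdiff (hsub : ∀ x y : X, φ (x + y) ≤ φ x + φ y)
    (hpos : ∀ t : ℝ, 0 < t → ∀ x : X, φ (t • x) = t * φ x) {r : X →L[ℝ] ℝ} {δ : ℝ} {z : X}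
    (hr : r ∈ frechetSubdiff φ δ z) (v : X) : r v ≤ φ v + δ * ‖v‖ := by
  have hη : ∀ η > 0, r v ≤ φ v + (δ + η) * ‖v‖ := by
    intro η hη
    have hline : Tendsto (fun t : ℝ => z + t • v) (𝓝[>] 0) (𝓝 z) :=
      tendsto_nhdsWithin_of_tendsto_nhds
        ((by fun_prop : Continuous fun t : ℝ => z + t • v).tendsto' 0 z (by simp))
    obtain ⟨t, hest, ht⟩ := ((hline.eventually (hr η hη)).and self_mem_nhdsWithin).exists
    have ht : 0 < t := ht
    have hφt := hsub z (t • v)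
    simp only [add_sub_cancel_left, map_smul, smul_eq_mul, norm_smul, Real.norm_of_nonneg ht.le,
      hpos t ht] at hest hφt
    nlinarith
  have hlim : Tendsto (fun η => φ v + (δ + η) * ‖v‖) (𝓝[>] 0) (𝓝 (φ v + δ * ‖v‖)) :=
    tendsto_nhdsWithin_of_tendsto_nhds
      ((by fun_prop : Continuous fun η : ℝ => φ v + (δ + η) * ‖v‖).tendsto' 0 _ (by simp))
  exact ge_of_tendsto hlim (eventually_nhdsWithin_of_forall hη)

theorem apply_le_of_mem_limitingSubdiff (hsub : ∀ x y : X, φ (x + y) ≤ φ x + φ y)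
    (hpos : ∀ t : ℝ, 0 < t → ∀ x : X, φ (t • x) = t * φ x) {r : X →L[ℝ] ℝ} {z : X}
    (hr : r ∈ limitingSubdiff φ z) (v : X) : r v ≤ φ v := by
  obtain ⟨_, δ, s, _, hδ, _, _, hs, hsr⟩ := hr
  have hbound : Tendsto (fun k => φ v + δ k * ‖v‖) atTop (𝓝 (φ v)) := by
    simpa using (hδ.mul_const ‖v‖).const_add (φ v)
  exact le_of_tendsto_of_tendsto' (hsr v) hbound fun k =>
    apply_le_add_mul_norm_of_mem_frechetSubdiff hsub hpos (hs k) v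

end Sublinear

section InfConv

variable {E : Type*} [NormedAddCommGroup E] {f : E → EReal} {φ : E → ℝ} {g : E → ℝ} {m ℓ : ℝ}

theorem le_toReal_add_of_eq_infConv (hg : ∀ x, (g x : EReal) = infConv f φ x)
    (hfbot : ∀ x, f x ≠ ⊥) {w : E} (hw : f w ≠ ⊤) (x : E) : g x ≤ (f w).toReal + φ (w - x) := by
  rw [← EReal.coe_le_coe_iff, hg, EReal.coe_add, EReal.coe_toReal hw (hfbot w)]
  exact iInf_le _ w

theorem sub_mul_norm_sub_le (hLip : ∀ x y : E, f x ≠ ⊤ → f y ≠ ⊤ →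
      |(f x).toReal - (f y).toReal| ≤ ℓ * ‖x - y‖)
    (hcoer : ∀ x : E, m * ‖x‖ ≤ φ x) (hℓ : 0 ≤ ℓ) {x w : E} (hx : f x ≠ ⊤) (hw : f w ≠ ⊤)
    (u : E) : (m - ℓ) * ‖w - u‖ ≤ (f w).toReal + φ (w - u) - (f x).toReal + ℓ * ‖u - x‖ := by
  have hfx := (abs_le.1 (hLip x w hx hw)).2
  have htri : ‖x - w‖ ≤ ‖w - u‖ + ‖u - x‖ := by
    rw [norm_sub_rev]; exact norm_sub_le_norm_sub_add_norm_sub w u x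
  nlinarith [hcoer (w - u), mul_le_mul_of_nonneg_left htri hℓ]

theorem eq_toReal_of_eq_infConv (hg : ∀ x, (g x : EReal) = infConv f φ x)
    (hfbot : ∀ x, f x ≠ ⊥) (hφ0 : φ 0 = 0)
    (hLip : ∀ x y : E, f x ≠ ⊤ → f y ≠ ⊤ → |(f x).toReal - (f y).toReal| ≤ ℓ * ‖x - y‖)
    (hcoer : ∀ x : E, m * ‖x‖ ≤ φ x) (hℓm : ℓ ≤ m) {x : E} (hx : f x ≠ ⊤) :
    g x = (f x).toReal := by
  refine le_antisymm (by simpa [hφ0] using le_toReal_add_of_eq_infConv hg hfbot hx x) ?_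
  rw [← EReal.coe_le_coe_iff, hg, EReal.coe_toReal hx (hfbot x)]
  refine le_iInf fun w => ?_
  by_cases hw : f w = ⊤
  · simp [hw]
  rw [← EReal.coe_toReal hx (hfbot x), ← EReal.coe_toReal hw (hfbot w), ← EReal.coe_add,
    EReal.coe_le_coe_iff]
  have hfx := (abs_le.1 (hLip x w hx hw)).2
  rw [norm_sub_rev] at hfx
  nlinarith [hcoer (w - x), mul_le_mul_of_nonneg_right hℓm (norm_nonneg (w - x))]

theorem exists_toReal_add_eq_of_eq_infConv [NormedSpace ℝ E] [FiniteDimensional ℝ E]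
    (hg : ∀ x, (g x : EReal) = infConv f φ x) (hfbot : ∀ x, f x ≠ ⊥)
    (hflsc : LowerSemicontinuous f) (hφc : Continuous φ)
    (hLip : ∀ x y : E, f x ≠ ⊤ → f y ≠ ⊤ → |(f x).toReal - (f y).toReal| ≤ ℓ * ‖x - y‖)
    (hcoer : ∀ x : E, m * ‖x‖ ≤ φ x) (hℓ : 0 ≤ ℓ) (hℓm : ℓ < m) {x₀ : E} (hx₀ : f x₀ ≠ ⊤)
    (x : E) : ∃ w, f w ≠ ⊤ ∧ g x = (f w).toReal + φ (w - x) := by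
  set F : E → EReal := fun w => f w + ((φ (w - x) : ℝ) : EReal)
  have hF : LowerSemicontinuous F := hflsc.add'
    (continuous_coe_real_ereal.comp (hφc.comp (continuous_sub_right x))).lowerSemicontinuous
    fun w => EReal.continuousAt_add (.inr (EReal.coe_ne_bot _)) (.inr (EReal.coe_ne_top _))
  have hFtop : ∀ {w} {c : ℝ}, F w ≤ (c : EReal) → f w ≠ ⊤ := fun {w c} h hw => by
    simp [F, hw] at h
  have hFreal : ∀ {w} (hw : f w ≠ ⊤), F w = (((f w).toReal + φ (w - x) : ℝ) : EReal) :=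
    fun hw => by simp only [F, EReal.coe_add, EReal.coe_toReal hw (hfbot _)]
  obtain ⟨w₀, hw₀⟩ := iInf_lt_iff.1 (show infConv f φ x < ((g x + 1 : ℝ) : EReal) by
    rw [← hg, EReal.coe_lt_coe_iff]; linarith)
  have hsublevel : ∀ w, F w ≤ ((g x + 1 : ℝ) : EReal) →
      w ∈ Metric.closedBall x ((g x + 1 - (f x₀).toReal + ℓ * ‖x - x₀‖) / (m - ℓ)) := by
    intro w hw
    have hwtop := hFtop hw
    rw [hFreal hwtop, EReal.coe_le_coe_iff] at hw
    rw [Metric.mem_closedBall, dist_eq_norm, le_div_iff₀ (by linarith), mul_comm]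
    linarith [sub_mul_norm_sub_le hLip hcoer hℓ hx₀ hwtop x]
  obtain ⟨a, ha⟩ := hF.exists_forall_le_of_isCompact_sublevel (isCompact_closedBall _ _)
    hsublevel hw₀.le
  have hFa : F a = g x := le_antisymm ((le_iInf ha).trans (hg x).ge) (hg x ▸ iInf_le F a)
  have hatop : f a ≠ ⊤ := hFtop hFa.le
  refine ⟨a, hatop, ?_⟩
  rwa [hFreal hatop, EReal.coe_eq_coe_iff, eq_comm] at hFa

theorem le_add_mul_norm_sub_of_eq_infConv (hg : ∀ x, (g x : EReal) = infConv f φ x)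
    (hfbot : ∀ x, f x ≠ ⊥) (hsub : ∀ x y : E, φ (x + y) ≤ φ x + φ y) {M : ℝ}
    (hM : ∀ z, φ z ≤ M * ‖z‖) (hmin : ∀ x, ∃ w, f w ≠ ⊤ ∧ g x = (f w).toReal + φ (w - x))
    (x y : E) : g x ≤ g y + M * ‖x - y‖ := by
  obtain ⟨w, hw, hgy⟩ := hmin y
  have := le_add_mul_norm_sub_of_le_mul_norm hsub hM (w - x) (w - y)
  rw [sub_sub_sub_cancel_left, norm_sub_rev] at this
  linarith [le_toReal_add_of_eq_infConv hg hfbot hw x]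

theorem exists_toReal_add_eq_and_norm_sub_le
    (hLip : ∀ x y : E, f x ≠ ⊤ → f y ≠ ⊤ → |(f x).toReal - (f y).toReal| ≤ ℓ * ‖x - y‖)
    (hcoer : ∀ x : E, m * ‖x‖ ≤ φ x) (hℓ : 0 ≤ ℓ) (hℓm : ℓ < m)
    (hmin : ∀ x, ∃ w, f w ≠ ⊤ ∧ g x = (f w).toReal + φ (w - x)) {M : ℝ}
    (hgM : ∀ x y, g x ≤ g y + M * ‖x - y‖) {x : E} (hx : f x ≠ ⊤) (hgx : g x = (f x).toReal)
    (u : E) : ∃ w, f w ≠ ⊤ ∧ g u = (f w).toReal + φ (w - u) ∧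
      ‖w - u‖ ≤ (M + ℓ) / (m - ℓ) * ‖u - x‖ := by
  obtain ⟨w, hw, hgu⟩ := hmin u
  refine ⟨w, hw, hgu, ?_⟩
  rw [div_mul_eq_mul_div, le_div_iff₀ (by linarith), mul_comm]
  have := sub_mul_norm_sub_le hLip hcoer hℓ hx hw u
  linarith [hgM u x]

end InfConv

section Subdifferentials

variable {f : X → EReal} {φ : X → ℝ} {g : X → ℝ} {m ℓ : ℝ}

theorem mem_frechetSubdiffE_of_mem_frechetSubdiff_infConv
    (hg : ∀ x, (g x : EReal) = infConv f φ x) (hfbot : ∀ x, f x ≠ ⊥) {x w : X} (hw : f w ≠ ⊤)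
    (hgx : g x = (f w).toReal + φ (w - x)) {q : X →L[ℝ] ℝ} {ε : ℝ}
    (hq : q ∈ frechetSubdiff g ε x) : q ∈ frechetSubdiffE f ε w := by
  intro η hη
  have hshift : Tendsto (fun z => z - w + x) (𝓝 w) (𝓝 x) :=
    (by fun_prop : Continuous fun z => z - w + x).tendsto' w x (by simp)
  filter_upwards [hshift.eventually (hq η hη)] with z hz
  by_cases hztop : f z = ⊤
  · rw [hztop, ← EReal.coe_toReal hw (hfbot w), EReal.top_sub_coe,
      EReal.top_add_of_ne_bot (EReal.coe_ne_bot _)]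
    exact le_top
  rw [EReal.coe_le_sub_add_coe_iff hztop (hfbot z) hw (hfbot w)]
  have hgz := le_toReal_add_of_eq_infConv hg hfbot hztop (z - w + x)
  rw [show z - (z - w + x) = w - x by abel] at hgz
  rw [add_sub_cancel_right] at hz
  linarith

theorem neg_mem_frechetSubdiff_of_mem_frechetSubdiff_infConv
    (hg : ∀ x, (g x : EReal) = infConv f φ x) (hfbot : ∀ x, f x ≠ ⊥) {x w : X} (hw : f w ≠ ⊤)
    (hgx : g x = (f w).toReal + φ (w - x)) {q : X →L[ℝ] ℝ} {ε : ℝ}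
    (hq : q ∈ frechetSubdiff g ε x) : -q ∈ frechetSubdiff φ ε (w - x) := by
  intro η hη
  have hreflect : Tendsto (fun ζ => w - ζ) (𝓝 (w - x)) (𝓝 x) :=
    (by fun_prop : Continuous fun ζ => w - ζ).tendsto' (w - x) x (by simp)
  filter_upwards [hreflect.eventually (hq η hη)] with ζ hζ
  have hgζ := le_toReal_add_of_eq_infConv hg hfbot hw (w - ζ)
  have hdiff : w - ζ - x = -(ζ - (w - x)) := by abel
  rw [sub_sub_cancel] at hgζ
  rw [hdiff, map_neg, norm_neg] at hζ
  rw [neg_apply]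
  linarith

theorem limitingSubdiff_subset_of_eq_infConv (hg : ∀ x, (g x : EReal) = infConv f φ x)
    (hfbot : ∀ x, f x ≠ ⊥) (hφc : Continuous φ) (hφ0 : φ 0 = 0)
    (hLip : ∀ x y : X, f x ≠ ⊤ → f y ≠ ⊤ → |(f x).toReal - (f y).toReal| ≤ ℓ * ‖x - y‖)
    (hcoer : ∀ x : X, m * ‖x‖ ≤ φ x) (hℓ : 0 ≤ ℓ) (hℓm : ℓ < m)
    (hmin : ∀ x, ∃ w, f w ≠ ⊤ ∧ g x = (f w).toReal + φ (w - x)) {x₀ : X}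
    (hx₀ : (g x₀ : EReal) = f x₀) {p : X →L[ℝ] ℝ} (hp : p ∈ limitingSubdiff g x₀) :
    p ∈ limitingSubdiffE f x₀ ∧ -p ∈ limitingSubdiff φ 0 := by
  obtain ⟨x, ε, q, hε0, hε, hx, hgx, hq, hqp⟩ := hp
  choose w hw hgw using fun k => hmin (x k)
  have hx₀top : f x₀ ≠ ⊤ := hx₀ ▸ EReal.coe_ne_top _
  have hgx₀ : (f x₀).toReal = g x₀ := by rw [← hx₀, EReal.toReal_coe]
  have hgap : Tendsto (fun k => w k - x k) atTop (𝓝 0) := by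
    have hbound : Tendsto (fun k => (g (x k) - g x₀ + ℓ * ‖x k - x₀‖) / (m - ℓ)) atTop
        (𝓝 ((g x₀ - g x₀ + ℓ * ‖x₀ - x₀‖) / (m - ℓ))) :=
      ((hgx.sub_const _).add ((hx.sub_const x₀).norm.const_mul ℓ)).div_const _
    refine squeeze_zero_norm (fun k => ?_) (by simpa using hbound)
    rw [le_div_iff₀ (by linarith), mul_comm]
    have := sub_mul_norm_sub_le hLip hcoer hℓ hx₀top (hw k) (x k)
    rwa [← hgw k, hgx₀] at this
  have hφgap : Tendsto (fun k => φ (w k - x k)) atTop (𝓝 (φ 0)) :=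
    hφc.continuousAt.tendsto.comp hgap
  have hfw : Tendsto (fun k => f (w k)) atTop (𝓝 (f x₀)) := by
    have hfw_eq : ∀ k, f (w k) = ((g (x k) - φ (w k - x k) : ℝ) : EReal) := fun k => by
      rw [hgw k, add_sub_cancel_right, EReal.coe_toReal (hw k) (hfbot _)]
    simp only [hfw_eq, ← hx₀, EReal.tendsto_coe]
    simpa [hφ0] using hgx.sub hφgap
  refine ⟨⟨w, ε, q, hε0, hε, by simpa using hgap.add hx, hfw,
      fun k => mem_frechetSubdiffE_of_mem_frechetSubdiff_infConv hg hfbot (hw k) (hgw k) (hq k),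
      hqp⟩,
    ⟨fun k => w k - x k, ε, fun k => -q k, hε0, hε, hgap, hφgap,
      fun k => neg_mem_frechetSubdiff_of_mem_frechetSubdiff_infConv hg hfbot (hw k) (hgw k) (hq k),
      fun v => (hqp v).neg⟩⟩

theorem mem_frechetSubdiff_of_mem_frechetSubdiffE (hfbot : ∀ x, f x ≠ ⊥) {p q : X →L[ℝ] ℝ}
    (hpφ : ∀ v, -p v ≤ φ v) {x : X} (hx : f x ≠ ⊤) (hgx : g x = (f x).toReal) {C : ℝ}
    (hC : 0 ≤ C) (hnear : ∀ u, ∃ w, f w ≠ ⊤ ∧ g u = (f w).toReal + φ (w - u) ∧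
      ‖w - u‖ ≤ C * ‖u - x‖) {ε : ℝ} (hε : 0 ≤ ε) (hq : q ∈ frechetSubdiffE f ε x) :
    q ∈ frechetSubdiff g (ε * (1 + C) + C * ‖q - p‖) x := by
  intro η hη
  obtain ⟨ρ, hρ, hball⟩ := Metric.eventually_nhds_iff.1 (hq (η / (1 + C)) (by positivity))
  refine Metric.eventually_nhds_iff.2 ⟨ρ / (1 + C), by positivity, fun u hu => ?_⟩
  obtain ⟨w, hw, hgu, hwu⟩ := hnear u
  rw [dist_eq_norm] at hu
  have hwx : ‖w - x‖ ≤ (1 + C) * ‖u - x‖ := by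
    linarith [norm_sub_le_norm_sub_add_norm_sub w u x]
  have hfw := hball (show dist w x < ρ by
    rw [dist_eq_norm]; linarith [(lt_div_iff₀' (by positivity)).1 hu])
  rw [EReal.coe_le_sub_add_coe_iff hw (hfbot w) hx (hfbot x)] at hfw
  have hqp : (q - p) (u - w) ≤ ‖q - p‖ * (C * ‖u - x‖) := by
    refine (le_abs_self _).trans ((q - p).le_opNorm _) |>.trans ?_
    gcongr
    rwa [norm_sub_rev]
  have hsplit : q (u - x) = q (w - x) + (q - p) (u - w) + -p (w - u) := by
    simp only [sub_apply, map_sub]; ring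
  have hslack : (ε + η / (1 + C)) * ‖w - x‖ ≤ (ε * (1 + C) + η) * ‖u - x‖ := by
    calc (ε + η / (1 + C)) * ‖w - x‖ ≤ (ε + η / (1 + C)) * ((1 + C) * ‖u - x‖) := by gcongr
      _ = (ε * (1 + C) + η) * ‖u - x‖ := by field_simp
  rw [hsplit]
  linarith [hpφ (w - u)]

theorem mem_limitingSubdiff_of_eq_infConv [FiniteDimensional ℝ X] (hfbot : ∀ x, f x ≠ ⊥)
    (hgc : Continuous g) (hgf : ∀ x, f x ≠ ⊤ → g x = (f x).toReal) {C : ℝ} (hC : 0 ≤ C)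
    (hnear : ∀ x, f x ≠ ⊤ → ∀ u, ∃ w, f w ≠ ⊤ ∧ g u = (f w).toReal + φ (w - u) ∧
      ‖w - u‖ ≤ C * ‖u - x‖)
    {x₀ : X} (hx₀ : (g x₀ : EReal) = f x₀) {p : X →L[ℝ] ℝ} (hpf : p ∈ limitingSubdiffE f x₀)
    (hpφ : ∀ v, -p v ≤ φ v) : p ∈ limitingSubdiff g x₀ := by
  obtain ⟨x, ε, q, hε0, hε, hx, hfx, hq, hqp⟩ := hpf
  have hqnorm : Tendsto (fun k => ‖q k - p‖) atTop (𝓝 0) :=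
    tendsto_iff_norm_sub_tendsto_zero.1 (ContinuousLinearMap.tendsto_of_tendsto_apply hqp)
  have hfin : ∀ᶠ k in atTop, f (x k) ≠ ⊤ := hfx.eventually_ne (hx₀ ▸ EReal.coe_ne_top _)
  refine mem_limitingSubdiff_of_eventually x (fun k => ε k * (1 + C) + C * ‖q k - p‖) q
    (fun k => by have := hε0 k; positivity) ?_ hx (hgc.continuousAt.tendsto.comp hx) ?_ hqp
  · simpa using (hε.mul_const (1 + C)).add (hqnorm.const_mul C)
  · filter_upwards [hfin] with k hk
    exact mem_frechetSubdiff_of_mem_frechetSubdiffE hfbot hpφ hk (hgf _ hk) hC (hnear _ hk)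
      (hε0 k) (hq k)

end Subdifferentials

theorem stmt_13_general [FiniteDimensional ℝ X] (f : X → EReal) (φ : X → ℝ) (g : X → ℝ)
    (hfbot : ∀ x, f x ≠ ⊥) (hflsc : LowerSemicontinuous f)
    (hφ0 : φ 0 = 0) (hφcont : ContinuousAt φ 0)
    (hsub : ∀ x y : X, φ (x + y) ≤ φ x + φ y)
    (hpos : ∀ t : ℝ, 0 < t → ∀ x : X, φ (t • x) = t * φ x)
    (m ℓ : ℝ) (hℓ : 0 ≤ ℓ) (hlm : ℓ < m)
    (hcoer : ∀ x : X, m * ‖x‖ ≤ φ x)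
    (hLip : ∀ x y : X, f x ≠ ⊤ → f y ≠ ⊤ → |(f x).toReal - (f y).toReal| ≤ ℓ * ‖x - y‖)
    (hg : ∀ x, (g x : EReal) = infConv f φ x)
    (x0 : X) (hx0 : (g x0 : EReal) = f x0) :
    limitingSubdiff g x0 =
      limitingSubdiffE f x0 ∩ {p : X →L[ℝ] ℝ | -p ∈ limitingSubdiff φ (0 : X)} := by
  obtain ⟨M, hM0, hM⟩ := exists_le_mul_norm_of_continuousAt_zero hφ0 hφcont hpos
  have hφc : Continuous φ := continuous_of_le_mul_norm hsub hM
  have hmin := exists_toReal_add_eq_of_eq_infConv hg hfbot hflsc hφc hLip hcoer hℓ hlm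
    (hx0 ▸ EReal.coe_ne_top _)
  have hgM := le_add_mul_norm_sub_of_eq_infConv hg hfbot hsub hM hmin
  have hgc : Continuous g := (LipschitzWith.of_le_add_mul' M fun x y => by
    simpa [dist_eq_norm] using hgM x y).continuous
  have hgf := fun x (hx : f x ≠ ⊤) => eq_toReal_of_eq_infConv hg hfbot hφ0 hLip hcoer hlm.le hx
  ext p
  constructor
  · exact limitingSubdiff_subset_of_eq_infConv hg hfbot hφc hφ0 hLip hcoer hℓ hlm hmin hx0
  · rintro ⟨hpf, hpφ⟩
    have hpφ_le : ∀ v, -p v ≤ φ v := fun v => by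
      simpa using apply_le_of_mem_limitingSubdiff hsub hpos hpφ v
    have hnear := fun x (hx : f x ≠ ⊤) =>
      exists_toReal_add_eq_and_norm_sub_le hLip hcoer hℓ hlm hmin hgM hx (hgf x hx)
    exact mem_limitingSubdiff_of_eq_infConv hfbot hgc hgf
      (div_nonneg (by linarith) (by linarith)) hnear hx0 hpf hpφ_le

/-- limiting subdifferential equality in finite dimensions. -/
theorem stmt_13 [FiniteDimensional ℝ X] (f : X → EReal) (φ : X → ℝ) (g : X → ℝ)
    (hfbot : ∀ x, f x ≠ ⊥) (hflsc : LowerSemicontinuous f)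
    (hφpos : ∀ x, 0 ≤ φ x) (hφ0 : φ 0 = 0) (hφcont : ContinuousAt φ 0)
    (hsub : ∀ x y : X, φ (x + y) ≤ φ x + φ y)
    (hpos : ∀ t : ℝ, 0 < t → ∀ x : X, φ (t • x) = t * φ x)
    (m ℓ : ℝ) (hm : 0 < m) (hℓ : 0 ≤ ℓ) (hlm : ℓ < m)
    (hcoer : ∀ x : X, m * ‖x‖ ≤ φ x)
    (hLip : ∀ x y : X, f x ≠ ⊤ → f y ≠ ⊤ → |(f x).toReal - (f y).toReal| ≤ ℓ * ‖x - y‖)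
    (hg : ∀ x, (g x : EReal) = infConv f φ x)
    (x0 : X) (hx0 : (g x0 : EReal) = f x0) :
    limitingSubdiff g x0 =
      limitingSubdiffE f x0 ∩ {p : X →L[ℝ] ℝ | -p ∈ limitingSubdiff φ (0 : X)} :=
  stmt_13_general f φ g hfbot hflsc hφ0 hφcont hsub hpos m ℓ hℓ hlm hcoer hLip hg x0 hx0
end

section
/- Suppose the projection mapping P (where P(x) := {w : f(w)+φ(w−x) = (f⊕φ)(x)}) is inner semicompact at x̄ and φ is continuous at w−x̄ for every w ∈ P(x̄). Then the limiting subdifferential satisfies ∂(f⊕φ)(x̄) ⊂ ⋃_{w̄ ∈ P(x̄)} ( ∂f(w̄) ∩ [−∂φ(w̄−x̄)] ). -/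
/-!
A Fréchet `ε`-subgradient `q` of `f ⊕ φ` at `x` passes to every minimiser `w` of
`f w + φ (w - x)`: moving `w` to `u` while moving `x` to `x + (u - w)` keeps `w - x` fixed, so `q`
is an `ε`-subgradient of `f` at `w`; moving the base point to `w - y` with `w` fixed shows that
`-q` is one of `φ` at `w - x`. Inner semicompactness provides minimisers converging along a
subsequence, and continuity of `φ` makes `f (w k) = (f ⊕ φ) (x k) - φ (w k - x k)` converge.
-/

open Filter Topology Set Bornology

variable {X : Type*} [NormedAddCommGroup X] [NormedSpace ℝ X]

lemma EReal.eq_coe_sub_of_add_coe_eq {a : EReal} {b c : ℝ} (h : a + b = c) :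
    a = ((c - b : ℝ) : EReal) := by
  induction a using EReal.rec with
  | bot => simp at h
  | top => simp at h
  | coe a =>
    rw [← EReal.coe_add, EReal.coe_eq_coe_iff] at h
    rw [EReal.coe_eq_coe_iff]
    linarith

section InfConv

variable {f : X → EReal} {φ : X → ℝ} {g : X → ℝ}

lemma mem_frechetSubdiffE_of_le_infConv (hle : ∀ x, (g x : EReal) ≤ infConv f φ x) {x w : X}
    (hw : f w + ((φ (w - x) : ℝ) : EReal) = g x) {ε : ℝ} {q : X →L[ℝ] ℝ}
    (hq : q ∈ frechetSubdiff g ε x) : q ∈ frechetSubdiffE f ε w := by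
  intro η hη
  have hshift : Tendsto (fun u : X => x + (u - w)) (𝓝 w) (𝓝 x) :=
    (by fun_prop : Continuous fun u : X => x + (u - w)).tendsto' w x (by simp)
  filter_upwards [hshift.eventually (hq η hη)] with u hu
  rw [add_sub_cancel_left] at hu
  have hgu : (g (x + (u - w)) : EReal) ≤ f u + ((φ (w - x) : ℝ) : EReal) := by
    simpa [show u - (x + (u - w)) = w - x by abel] using
      (hle (x + (u - w))).trans (iInf_le _ u)
  rw [EReal.eq_coe_sub_of_add_coe_eq hw]
  generalize f u = a at hgu ⊢
  induction a using EReal.rec with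
  | bot => simp at hgu
  | top => rw [EReal.top_sub_coe, EReal.top_add_coe]; exact le_top
  | coe a =>
    rw [← EReal.coe_add, EReal.coe_le_coe_iff] at hgu
    rw [← EReal.coe_sub, ← EReal.coe_add, EReal.coe_le_coe_iff]
    linarith

lemma neg_mem_frechetSubdiff_of_le_infConv (hle : ∀ x, (g x : EReal) ≤ infConv f φ x)
    {x w : X} (hw : f w + ((φ (w - x) : ℝ) : EReal) = g x) {ε : ℝ} {q : X →L[ℝ] ℝ}
    (hq : q ∈ frechetSubdiff g ε x) : -q ∈ frechetSubdiff φ ε (w - x) := by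
  intro η hη
  have hshift : Tendsto (fun y : X => w - y) (𝓝 (w - x)) (𝓝 x) :=
    (by fun_prop : Continuous fun y : X => w - y).tendsto' (w - x) x (by simp)
  filter_upwards [hshift.eventually (hq η hη)] with y hy
  rw [show w - y - x = -(y - (w - x)) by abel, map_neg, norm_neg] at hy
  have hgy : (g (w - y) : EReal) ≤ f w + ((φ y : ℝ) : EReal) := by
    simpa using (hle (w - y)).trans (iInf_le _ w)
  rw [EReal.eq_coe_sub_of_add_coe_eq hw, ← EReal.coe_add, EReal.coe_le_coe_iff] at hgy
  simp only [neg_apply]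
  linarith

lemma mem_limitingSubdiff_of_tendsto_minimizers (hle : ∀ x, (g x : EReal) ≤ infConv f φ x)
    {x w : ℕ → X} {x0 w0 : X} {ε : ℕ → ℝ} {q : ℕ → X →L[ℝ] ℝ} {p : X →L[ℝ] ℝ}
    (hε0 : ∀ k, 0 ≤ ε k) (hε : Tendsto ε atTop (𝓝 0)) (hx : Tendsto x atTop (𝓝 x0))
    (hgx : Tendsto (fun k => g (x k)) atTop (𝓝 (g x0)))
    (hq : ∀ k, q k ∈ frechetSubdiff g (ε k) (x k))
    (hqp : ∀ v, Tendsto (fun k => q k v) atTop (𝓝 (p v)))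
    (hw : Tendsto w atTop (𝓝 w0))
    (hwmin : ∀ k, f (w k) + ((φ (w k - x k) : ℝ) : EReal) = g (x k))
    (hw0min : f w0 + ((φ (w0 - x0) : ℝ) : EReal) = g x0) (hφ : ContinuousAt φ (w0 - x0)) :
    p ∈ limitingSubdiffE f w0 ∧ -p ∈ limitingSubdiff φ (w0 - x0) := by
  have hwx : Tendsto (fun k => w k - x k) atTop (𝓝 (w0 - x0)) := hw.sub hx
  have hφwx : Tendsto (fun k => φ (w k - x k)) atTop (𝓝 (φ (w0 - x0))) := hφ.tendsto.comp hwx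
  have hfw : Tendsto (fun k => f (w k)) atTop (𝓝 (f w0)) := by
    simp only [EReal.eq_coe_sub_of_add_coe_eq (hwmin _), EReal.eq_coe_sub_of_add_coe_eq hw0min]
    exact EReal.tendsto_coe.mpr (hgx.sub hφwx)
  refine ⟨⟨w, ε, q, hε0, hε, hw, hfw, fun k => ?_, hqp⟩,
    ⟨fun k => w k - x k, ε, fun k => -q k, hε0, hε, hwx, hφwx, fun k => ?_, fun v => ?_⟩⟩
  · exact mem_frechetSubdiffE_of_le_infConv hle (hwmin k) (hq k)
  · exact neg_mem_frechetSubdiff_of_le_infConv hle (hwmin k) (hq k)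
  · simpa using (hqp v).neg

end InfConv

theorem stmt_14_general (f : X → EReal) (φ : X → ℝ) (g : X → ℝ)
    (hg : ∀ x, (g x : EReal) = infConv f φ x) (x0 : X)
    (P : X → Set X)
    (hP : ∀ x : X, P x = {w : X | f w + ((φ (w - x) : ℝ) : EReal) = (g x : EReal)})
    (hisc : ∀ x : ℕ → X, Tendsto x atTop (𝓝 x0) →
      ∃ w : ℕ → X, (∀ k, w k ∈ P (x k)) ∧
        ∃ (σ : ℕ → ℕ) (w0 : X), StrictMono σ ∧ w0 ∈ P x0 ∧
          Tendsto (w ∘ σ) atTop (𝓝 w0))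
    (hφc : ∀ w ∈ P x0, ContinuousAt φ (w - x0)) :
    ∀ p ∈ limitingSubdiff g x0, ∃ w0 ∈ P x0,
      p ∈ limitingSubdiffE f w0 ∧ -p ∈ limitingSubdiff φ (w0 - x0) := by
  rintro p ⟨x, ε, q, hε0, hε, hx, hgx, hq, hqp⟩
  obtain ⟨w, hwP, σ, w0, hσ, hw0P, hw⟩ := hisc x hx
  have hσ_atTop : Tendsto σ atTop atTop := hσ.tendsto_atTop
  refine ⟨w0, hw0P, mem_limitingSubdiff_of_tendsto_minimizers (fun x => (hg x).le)
    (fun k => hε0 (σ k)) (hε.comp hσ_atTop) (hx.comp hσ_atTop) (hgx.comp hσ_atTop)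
    (fun k => hq (σ k)) (fun v => (hqp v).comp hσ_atTop) hw (fun k => ?_) ?_ (hφc w0 hw0P)⟩
  · simpa [hP] using hwP (σ k)
  · simpa [hP] using hw0P

/-- limiting subdifferential estimate under inner semicompactness. -/
theorem stmt_14 [CompleteSpace X] (f : X → EReal) (φ : X → ℝ) (g : X → ℝ)
    (hfbot : ∀ x, f x ≠ ⊥) (hφpos : ∀ x, 0 ≤ φ x)
    (hg : ∀ x, (g x : EReal) = infConv f φ x) (x0 : X)
    (P : X → Set X)
    (hP : ∀ x : X, P x = {w : X | f w + ((φ (w - x) : ℝ) : EReal) = (g x : EReal)})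
    (hPne : (P x0).Nonempty)
    (hisc : ∀ x : ℕ → X, Tendsto x atTop (𝓝 x0) →
      ∃ w : ℕ → X, (∀ k, w k ∈ P (x k)) ∧
        ∃ (σ : ℕ → ℕ) (w0 : X), StrictMono σ ∧ w0 ∈ P x0 ∧
          Tendsto (w ∘ σ) atTop (𝓝 w0))
    (hφc : ∀ w ∈ P x0, ContinuousAt φ (w - x0)) :
    ∀ p ∈ limitingSubdiff g x0, ∃ w0 ∈ P x0,
      p ∈ limitingSubdiffE f w0 ∧ -p ∈ limitingSubdiff φ (w0 - x0) :=
  stmt_14_general f φ g hg x0 P hP hisc hφc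
end
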